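/- arXiv:2211.10886 — 7 statements merged into one kernel-verified Lean document; each statement's English description precedes it below -/
import Mathlib

section
/- Let Q be a real trigonometric polynomial of degree n that has a zero of order k at t = 0, and suppose |Q| attains its maximum over [0, 2π] at a point t₀ ∈ [0, 2π]. Then t₀ ≥ (k!/n^k)^(1/k). -/
open Real Finset

/-!
Bernstein's inequality `‖T'‖ ≤ n ‖T‖` follows from M. Riesz's interpolation formula
`T'(0) = ∑ₗ wₗ T(xₗ)`, where `xₗ` runs over the `2n` zeros of `cos (n t)` in `(0, 2π)` and the
weights satisfy `∑ₗ |wₗ| = n`. Writing `wₗ sin (j xₗ)` and `|wₗ|` as differences of Fejér kernels,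
via `(1 - cos x) F_N(x) = 1 - cos (N x)`, all weight sums reduce to `∑ₗ cos (k xₗ) = 0` for
`0 < k < 2n`. Iterating Bernstein gives `|Q⁽ᵏ⁾| ≤ nᵏ ‖Q‖`, so a zero of order `k` at `0` forces
`|Q t| ≤ nᵏ ‖Q‖ tᵏ / k!` for `t ≥ 0`; at a maximum point `t₀` this reads `k! / nᵏ ≤ t₀ᵏ`.
-/

noncomputable def trigPoly (n : ℕ) (a b : ℕ → ℝ) (t : ℝ) : ℝ :=
  a 0 + ∑ j ∈ Icc 1 n, (a j * cos (j * t) + b j * sin (j * t))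

def IsTrigPoly (n : ℕ) (f : ℝ → ℝ) : Prop :=
  ∃ a b : ℕ → ℝ, f = trigPoly n a b

section TrigPoly

variable {n : ℕ} {a b : ℕ → ℝ}

theorem hasDerivAt_trigPoly (t : ℝ) :
    HasDerivAt (trigPoly n a b) (trigPoly n (fun j => j * b j) (fun j => -(j * a j)) t) t := by
  have hterm (j : ℕ) : HasDerivAt (fun t : ℝ => a j * cos (j * t) + b j * sin (j * t))
      (j * b j * cos (j * t) + -(j * a j) * sin (j * t)) t := by
    have hlin : HasDerivAt (fun t : ℝ => (j : ℝ) * t) j t := by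
      simpa using (hasDerivAt_id t).const_mul (j : ℝ)
    exact ((hlin.cos.const_mul (a j)).fun_add (hlin.sin.const_mul (b j))).congr_deriv
      (by ring)
  exact ((HasDerivAt.fun_sum (u := Icc 1 n) fun j _ => hterm j).const_add (a 0)).congr_deriv
    (by simp [trigPoly])

theorem deriv_trigPoly :
    deriv (trigPoly n a b) = trigPoly n (fun j => j * b j) (fun j => -(j * a j)) :=
  funext fun t => (hasDerivAt_trigPoly t).deriv

theorem trigPoly_add (t s : ℝ) :
    trigPoly n a b (t + s) =
      trigPoly n (fun j => a j * cos (j * t) + b j * sin (j * t))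
        (fun j => b j * cos (j * t) - a j * sin (j * t)) s := by
  simp only [trigPoly, CharP.cast_eq_zero, zero_mul, cos_zero, sin_zero, mul_one, mul_zero,
    add_zero]
  refine congrArg _ (sum_congr rfl fun j _ => ?_)
  rw [mul_add, cos_add, sin_add]
  ring

theorem periodic_trigPoly : Function.Periodic (trigPoly n a b) (2 * π) := by
  intro t
  simp only [trigPoly]
  refine congrArg _ (sum_congr rfl fun j _ => ?_)
  rw [mul_add, cos_add_nat_mul_two_pi, sin_add_nat_mul_two_pi]

theorem contDiff_trigPoly : ContDiff ℝ ⊤ (trigPoly n a b) := by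
  unfold trigPoly
  fun_prop

end TrigPoly

namespace IsTrigPoly

variable {n : ℕ} {f : ℝ → ℝ}

theorem deriv (hf : IsTrigPoly n f) : IsTrigPoly n (deriv f) := by
  obtain ⟨a, b, rfl⟩ := hf
  exact ⟨_, _, deriv_trigPoly⟩

theorem iteratedDeriv (hf : IsTrigPoly n f) (k : ℕ) : IsTrigPoly n (iteratedDeriv k f) := by
  induction k with
  | zero => simpa using hf
  | succ k ih => simpa [iteratedDeriv_succ] using ih.deriv

theorem comp_const_add (hf : IsTrigPoly n f) (t : ℝ) : IsTrigPoly n (fun s => f (t + s)) := by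
  obtain ⟨a, b, rfl⟩ := hf
  exact ⟨_, _, funext (trigPoly_add t)⟩

theorem contDiff (hf : IsTrigPoly n f) : ContDiff ℝ ⊤ f := by
  obtain ⟨a, b, rfl⟩ := hf
  exact contDiff_trigPoly

theorem periodic (hf : IsTrigPoly n f) : Function.Periodic f (2 * π) := by
  obtain ⟨a, b, rfl⟩ := hf
  exact periodic_trigPoly

end IsTrigPoly

noncomputable def dirichletKernel (m : ℕ) (x : ℝ) : ℝ :=
  1 + 2 * ∑ k ∈ Icc 1 m, cos (k * x)

/-- `N` times the Fejér kernel of order `N`. -/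
noncomputable def fejerKernel (N : ℕ) (x : ℝ) : ℝ :=
  ∑ m ∈ range N, dirichletKernel m x

theorem one_sub_cos_mul_dirichletKernel (m : ℕ) (x : ℝ) :
    (1 - cos x) * dirichletKernel m x = cos (m * x) - cos ((m + 1) * x) := by
  induction m with
  | zero => simp [dirichletKernel]
  | succ m ih =>
    have hsucc : dirichletKernel (m + 1) x = dirichletKernel m x + 2 * cos ((m + 1) * x) := by
      simp only [dirichletKernel, sum_Icc_succ_top (Nat.le_add_left 1 m), Nat.cast_succ]
      ring
    have hm : (m : ℝ) * x = (m + 1) * x - x := by ring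
    have hm2 : ((m + 1 : ℕ) + 1 : ℝ) * x = (m + 1) * x + x := by push_cast; ring
    rw [hsucc, mul_add, ih, hm2, hm, cos_add, cos_sub, Nat.cast_succ]
    ring

theorem one_sub_cos_mul_fejerKernel (N : ℕ) (x : ℝ) :
    (1 - cos x) * fejerKernel N x = 1 - cos (N * x) := by
  simp only [fejerKernel, mul_sum, one_sub_cos_mul_dirichletKernel]
  have := sum_range_sub' (fun m : ℕ => cos (m * x)) N
  push_cast at this
  simpa using this

theorem two_mul_sin_mul_sum_cos_odd_mul (θ : ℝ) (N : ℕ) :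
    2 * sin θ * ∑ l ∈ range N, cos ((2 * l + 1) * θ) = sin (2 * N * θ) := by
  have hterm (l : ℕ) : 2 * sin θ * cos ((2 * l + 1) * θ) =
      sin (2 * (l + 1 : ℕ) * θ) - sin (2 * l * θ) := by
    rw [two_mul_sin_mul_cos]
    push_cast
    rw [show θ - (2 * l + 1) * θ = -(2 * l * θ) by ring, sin_neg]
    ring_nf
  rw [mul_sum, sum_congr rfl fun l _ => hterm l]
  simpa using sum_range_sub (fun l : ℕ => sin (2 * l * θ)) N

/-- The zeros of `cos (n t)` in `(0, 2π)`, indexed by `l < 2n`. -/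
noncomputable def rieszNode (n l : ℕ) : ℝ := (2 * l + 1) * π / (2 * n)

/-- `sin (n xₗ) = (-1)ˡ`: Riesz's alternating weights, scaled so that `T'(0) = ∑ₗ wₗ T(xₗ)`. -/
noncomputable def rieszWeight (n l : ℕ) : ℝ :=
  sin (n * rieszNode n l) / (2 * n * (1 - cos (rieszNode n l)))

section Riesz

variable {n : ℕ}

theorem sum_cos_mul_rieszNode {k : ℕ} (hk0 : 0 < k) (hk : k < 2 * n) :
    ∑ l ∈ range (2 * n), cos (k * rieszNode n l) = 0 := by
  have hn : (0 : ℝ) < n := by exact_mod_cast (show 0 < n by omega)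
  have hkn : (k : ℝ) < 2 * n := by exact_mod_cast hk
  set θ := k * π / (2 * n) with hθ
  have hsin : sin θ ≠ 0 := by
    refine (sin_pos_of_pos_of_lt_pi (by positivity) ?_).ne'
    rw [div_lt_iff₀ (by positivity)]
    nlinarith [pi_pos]
  have hnode (l : ℕ) : k * rieszNode n l = (2 * l + 1) * θ := by
    simp only [rieszNode, θ]
    ring
  have htel := two_mul_sin_mul_sum_cos_odd_mul θ (2 * n)
  rw [show 2 * ((2 * n : ℕ) : ℝ) * θ = (2 * k : ℕ) * π by rw [hθ]; push_cast; field_simp,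
    sin_nat_mul_pi] at htel
  simp_rw [hnode]
  simpa [hsin] using htel

theorem sum_dirichletKernel_rieszNode {m : ℕ} (hm : m < 2 * n) :
    ∑ l ∈ range (2 * n), dirichletKernel m (rieszNode n l) = 2 * n := by
  simp only [dirichletKernel, sum_add_distrib, ← mul_sum]
  rw [sum_comm, sum_eq_zero fun k hk => sum_cos_mul_rieszNode (mem_Icc.1 hk).1 (by
    have := (mem_Icc.1 hk).2; omega)]
  simp

theorem sum_fejerKernel_rieszNode {N : ℕ} (hN : N ≤ 2 * n) :
    ∑ l ∈ range (2 * n), fejerKernel N (rieszNode n l) = 2 * n * N := by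
  simp only [fejerKernel]
  rw [sum_comm, sum_congr rfl fun m hm => sum_dirichletKernel_rieszNode (by
    have := mem_range.1 hm; omega)]
  simp [mul_comm]

theorem one_sub_cos_rieszNode_pos (hn : 0 < n) {l : ℕ} (hl : l < 2 * n) :
    0 < 1 - cos (rieszNode n l) := by
  have hn' : (0 : ℝ) < n := by exact_mod_cast hn
  have hl' : (l : ℝ) + 1 ≤ 2 * n := by exact_mod_cast hl
  have hpos : 0 < rieszNode n l := by unfold rieszNode; positivity
  have hlt : rieszNode n l < 2 * π := by
    rw [rieszNode, div_lt_iff₀ (by positivity)]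
    nlinarith [pi_pos]
  have hne : cos (rieszNode n l) ≠ 1 := fun h =>
    hpos.ne' ((cos_eq_one_iff_of_lt_of_lt (by linarith) hlt).1 h)
  linarith [(cos_le_one _).lt_of_ne hne]

theorem cos_mul_rieszNode (hn : n ≠ 0) (l : ℕ) : cos (n * rieszNode n l) = 0 :=
  cos_eq_zero_iff.2 ⟨l, by unfold rieszNode; field_simp; push_cast; ring⟩

theorem rieszNode_reflect (hn : n ≠ 0) {l : ℕ} (hl : l < 2 * n) :
    rieszNode n (2 * n - 1 - l) = 2 * π - rieszNode n l := by
  unfold rieszNode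
  rw [Nat.cast_sub (by omega), Nat.cast_sub (by omega)]
  field_simp
  push_cast
  ring

theorem sum_rieszWeight_mul_cos (hn : n ≠ 0) (j : ℕ) :
    ∑ l ∈ range (2 * n), rieszWeight n l * cos (j * rieszNode n l) = 0 := by
  set φ : ℝ → ℝ := fun x => sin (n * x) / (2 * n * (1 - cos x)) * cos (j * x)
  have hφ (x : ℝ) : φ (2 * π - x) = -φ x := by
    simp only [φ, mul_sub, sin_nat_mul_two_pi_sub, cos_nat_mul_two_pi_sub, cos_two_pi_sub]
    ring
  have hrefl := sum_range_reflect (fun l => φ (rieszNode n l)) (2 * n)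
  rw [sum_congr rfl fun l hl => by rw [rieszNode_reflect hn (mem_range.1 hl), hφ],
    sum_neg_distrib, neg_eq_iff_add_eq_zero, ← two_mul, mul_eq_zero] at hrefl
  simpa [φ, rieszWeight] using hrefl

theorem sum_rieszWeight_mul_sin (hn : 0 < n) {j : ℕ} (hj : j ≤ n) :
    ∑ l ∈ range (2 * n), rieszWeight n l * sin (j * rieszNode n l) = j := by
  have hn' : (n : ℝ) ≠ 0 := by exact_mod_cast hn.ne'
  have hterm : ∀ l ∈ range (2 * n), rieszWeight n l * sin (j * rieszNode n l) =
      (fejerKernel (n + j) (rieszNode n l) - fejerKernel (n - j) (rieszNode n l)) / (4 * n) := by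
    intro l hl
    -- `2 sin (n x) sin (j x) = (1 - cos ((n + j) x)) - (1 - cos ((n - j) x))`
    have hc := (one_sub_cos_rieszNode_pos hn (mem_range.1 hl)).ne'
    have hplus := one_sub_cos_mul_fejerKernel (n + j) (rieszNode n l)
    have hminus := one_sub_cos_mul_fejerKernel (n - j) (rieszNode n l)
    rw [Nat.cast_add, add_mul, cos_add] at hplus
    rw [Nat.cast_sub hj, sub_mul (n : ℝ), cos_sub] at hminus
    rw [rieszWeight, div_mul_eq_mul_div, div_eq_div_iff (by positivity) (by positivity)]
    linear_combination 2 * n * (hminus - hplus)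
  rw [sum_congr rfl hterm, ← sum_div, sum_sub_distrib, sum_fejerKernel_rieszNode (by omega),
    sum_fejerKernel_rieszNode (by omega), Nat.cast_add, Nat.cast_sub hj]
  field_simp
  ring

theorem sum_abs_rieszWeight (hn : 0 < n) :
    ∑ l ∈ range (2 * n), |rieszWeight n l| = n := by
  have hn' : (n : ℝ) ≠ 0 := by exact_mod_cast hn.ne'
  have hterm : ∀ l ∈ range (2 * n), |rieszWeight n l| =
      fejerKernel (2 * n) (rieszNode n l) / (4 * n) := by
    intro l hl
    have hc := one_sub_cos_rieszNode_pos hn (mem_range.1 hl)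
    have hcos := cos_mul_rieszNode hn.ne' l
    have hsin : |sin (n * rieszNode n l)| = 1 := by
      rcases cos_eq_zero_iff_sin_eq.1 hcos with h | h <;> simp [h]
    have hfejer := one_sub_cos_mul_fejerKernel (2 * n) (rieszNode n l)
    rw [Nat.cast_mul, Nat.cast_two, mul_assoc, cos_two_mul, hcos] at hfejer
    rw [rieszWeight, abs_div, hsin, abs_of_pos (by positivity)]
    field_simp
    linear_combination -2 * hfejer
  rw [sum_congr rfl hterm, ← sum_div, sum_fejerKernel_rieszNode le_rfl]
  field_simp
  push_cast
  ring

end Riesz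

theorem deriv_trigPoly_zero_eq_sum_rieszWeight {n : ℕ} (hn : 0 < n) (a b : ℕ → ℝ) :
    deriv (trigPoly n a b) 0 =
      ∑ l ∈ range (2 * n), rieszWeight n l * trigPoly n a b (rieszNode n l) := by
  have hconst := sum_rieszWeight_mul_cos hn.ne' 0
  simp only [CharP.cast_eq_zero, zero_mul, cos_zero, mul_one] at hconst
  simp only [deriv_trigPoly, trigPoly, mul_add, mul_sum, sum_add_distrib,
    mul_left_comm (rieszWeight n _)]
  rw [← sum_mul, hconst, sum_comm (s := range (2 * n)), sum_comm (s := range (2 * n))]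
  simp only [← mul_sum, sum_rieszWeight_mul_cos hn.ne']
  rw [sum_congr rfl (g := fun j => b j * j)
    (f := fun j => b j * ∑ l ∈ range (2 * n), rieszWeight n l * sin (j * rieszNode n l))
    fun j hj => by rw [sum_rieszWeight_mul_sin hn (mem_Icc.1 hj).2]]
  simp [mul_comm]

theorem abs_deriv_trigPoly_zero_le {n : ℕ} {a b : ℕ → ℝ} {M : ℝ}
    (hM : ∀ t, |trigPoly n a b t| ≤ M) : |deriv (trigPoly n a b) 0| ≤ n * M := by
  rcases Nat.eq_zero_or_pos n with rfl | hn
  · simp [deriv_trigPoly, trigPoly]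
  rw [deriv_trigPoly_zero_eq_sum_rieszWeight hn, ← sum_abs_rieszWeight hn, sum_mul]
  refine (abs_sum_le_sum_abs _ _).trans (sum_le_sum fun l _ => ?_)
  rw [abs_mul]
  exact mul_le_mul_of_nonneg_left (hM _) (abs_nonneg _)

namespace IsTrigPoly

variable {n : ℕ} {f : ℝ → ℝ}

theorem abs_deriv_le (hf : IsTrigPoly n f) {M : ℝ} (hM : ∀ t, |f t| ≤ M) (t : ℝ) :
    |_root_.deriv f t| ≤ n * M := by
  obtain ⟨a, b, hab⟩ := hf.comp_const_add t
  have h := abs_deriv_trigPoly_zero_le (n := n) (a := a) (b := b) (M := M) fun s => by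
    simpa [← hab] using hM (t + s)
  rwa [← hab, deriv_comp_const_add, add_zero] at h

theorem abs_iteratedDeriv_le (hf : IsTrigPoly n f) {M : ℝ} (hM : ∀ t, |f t| ≤ M) (k : ℕ)
    (t : ℝ) : |_root_.iteratedDeriv k f t| ≤ n ^ k * M := by
  induction k generalizing t with
  | zero => simpa using hM t
  | succ k ih =>
    rw [iteratedDeriv_succ, pow_succ', mul_assoc]
    exact (hf.iteratedDeriv k).abs_deriv_le ih t

end IsTrigPoly

open Nat in
theorem norm_le_of_iteratedDeriv_eq_zero {E : Type*} [NormedAddCommGroup E] [NormedSpace ℝ E]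
    {g : ℝ → E} {k : ℕ} {C : ℝ} (hg : ContDiff ℝ k g)
    (hzero : ∀ i < k, iteratedDeriv i g 0 = 0) (hC : ∀ s, 0 ≤ s → ‖iteratedDeriv k g s‖ ≤ C)
    {t : ℝ} (ht : 0 ≤ t) : ‖g t‖ ≤ C * t ^ k / k ! := by
  induction k generalizing g t with
  | zero => simpa using hC t ht
  | succ k ih =>
    have hd : Differentiable ℝ g := hg.differentiable (by simp)
    have hg' : ContDiff ℝ k (deriv g) := by
      push_cast at hg
      exact (contDiff_succ_iff_deriv.1 hg).2.2
    have hderiv : ∀ s, 0 ≤ s → ‖deriv g s‖ ≤ C * s ^ k / k ! := fun s hs =>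
      ih hg' (fun i hi => by simpa [← iteratedDeriv_succ'] using hzero (i + 1) (by omega))
        (fun s hs => by simpa [← iteratedDeriv_succ'] using hC s hs) hs
    have hpow (s : ℝ) :
        HasDerivAt (fun s => C * s ^ (k + 1) / (k + 1) !) (C * s ^ k / k !) s := by
      refine (((hasDerivAt_pow (k + 1) s).const_mul C).div_const _).congr_deriv ?_
      rw [factorial_succ]
      push_cast
      field_simp
    refine image_norm_le_of_norm_deriv_right_le_deriv_boundary hd.continuous.continuousOn
      (fun s _ => (hd s).hasDerivAt.hasDerivWithinAt) ?_ hpow (fun s hs => hderiv s hs.1)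
      ⟨ht, le_rfl⟩
    simpa using hzero 0 (by omega)

theorem trig_poly_zero_order_max_dist_a_general
    (n k : ℕ) (hk : 0 < k)
    (Q : ℝ → ℝ) (a b : ℕ → ℝ)
    (hQ : ∀ t, Q t = a 0 + ∑ j ∈ Finset.Icc 1 n,
        (a j * Real.cos (j * t) + b j * Real.sin (j * t)))
    (hQne : ∃ t, Q t ≠ 0)
    (hzero : ∀ i < k, iteratedDeriv i Q 0 = 0)
    (t₀ : ℝ) (ht₀ : t₀ ∈ Set.Icc 0 (2 * π))
    (hmax : ∀ t ∈ Set.Icc 0 (2 * π), |Q t| ≤ |Q t₀|) :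
    ((k.factorial : ℝ) / (n : ℝ) ^ k) ^ ((1 : ℝ) / k) ≤ t₀ := by
  have hQ' : IsTrigPoly n Q := ⟨a, b, funext hQ⟩
  have hM (t : ℝ) : |Q t| ≤ |Q t₀| := by
    obtain ⟨s, hs, hQs⟩ := hQ'.periodic.exists_mem_Ico₀ two_pi_pos t
    exact hQs ▸ hmax s (Set.Ico_subset_Icc_self hs)
  have hMpos : 0 < |Q t₀| := let ⟨t, ht⟩ := hQne; (abs_pos.2 ht).trans_le (hM t)
  have htaylor : |Q t₀| ≤ n ^ k * |Q t₀| * t₀ ^ k / k.factorial :=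
    norm_le_of_iteratedDeriv_eq_zero (hQ'.contDiff.of_le le_top) hzero
      (fun s _ => hQ'.abs_iteratedDeriv_le hM k s) ht₀.1
  have hpow : (k.factorial : ℝ) / n ^ k ≤ t₀ ^ k := by
    refine div_le_of_le_mul₀ (by positivity) (pow_nonneg ht₀.1 k) ?_
    rw [le_div_iff₀ (by positivity)] at htaylor
    nlinarith
  rw [one_div, Real.rpow_inv_le_iff_of_pos (by positivity) ht₀.1 (Nat.cast_pos.2 hk)]
  exact_mod_cast hpow

theorem trig_poly_zero_order_max_dist_a
    (n k : ℕ) (hn : 0 < n) (hk : 0 < k)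
    (Q : ℝ → ℝ) (a b : ℕ → ℝ)
    (hQ : ∀ t, Q t = a 0 + ∑ j ∈ Finset.Icc 1 n,
        (a j * Real.cos (j * t) + b j * Real.sin (j * t)))
    (hQne : ∃ t, Q t ≠ 0)
    (hzero : ∀ i < k, iteratedDeriv i Q 0 = 0)
    (t₀ : ℝ) (ht₀ : t₀ ∈ Set.Icc 0 (2 * π))
    (hmax : ∀ t ∈ Set.Icc 0 (2 * π), |Q t| ≤ |Q t₀|) :
    ((k.factorial : ℝ) / (n : ℝ) ^ k) ^ ((1 : ℝ) / k) ≤ t₀ :=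
  trig_poly_zero_order_max_dist_a_general n k hk Q a b hQ hQne hzero t₀ ht₀ hmax
end

section
/- Let Q be a real trigonometric polynomial of degree n that has a zero of order k at t = 0, and suppose |Q| attains its maximum over [0, 2π] at a point t₀ ∈ [0, 2π]. Then t₀ ≥ k/(e·n). -/
/-!
For a complex trigonometric polynomial `f` of degree at most `d` with `‖f‖ ≤ M` on a period,
the Fourier coefficients are bounded by `M`, hence `‖f⁽ʲ⁾‖ ≤ (2d+1) dʲ M` everywhere. If `f`
vanishes to order `K` at `0`, Taylor's theorem and `K! ≥ (K/e)ᴷ` give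
`‖f t‖ ≤ K (2d+1) M (e d t / K)ᴷ`. Applied to `f = Qᴺ` (degree `nN`, order `kN`, maximal modulus
`|Q t₀|ᴺ` at `t₀`) this says `1 ≤ kN (2nN+1) (e n t₀ / k)ᵏᴺ`, which fails for large `N` unless
`e n t₀ ≥ k`: passing to powers absorbs the polynomial loss `K (2d+1)` of the crude derivative
bound used in place of Bernstein's inequality.
-/

open Real Finset

section Leibniz

variable {𝕜 : Type*} [NontriviallyNormedField 𝕜] {𝔸 : Type*} [NormedRing 𝔸] [NormedAlgebra 𝕜 𝔸]

lemma iteratedDeriv_mul_eq_zero {f g : 𝕜 → 𝔸} {x : 𝕜} {A B n : ℕ} (hf : ContDiffAt 𝕜 n f x)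
    (hg : ContDiffAt 𝕜 n g x) (hfA : ∀ i < A, iteratedDeriv i f x = 0)
    (hgB : ∀ i < B, iteratedDeriv i g x = 0) (hn : n < A + B) :
    iteratedDeriv n (f * g) x = 0 := by
  rw [iteratedDeriv_mul hf hg]
  refine sum_eq_zero fun i hi => ?_
  rcases lt_or_ge i A with hiA | hiA
  · rw [hfA i hiA, mul_zero, zero_mul]
  · rw [hgB (n - i) (by rw [mem_range] at hi; omega), mul_zero]

lemma iteratedDeriv_pow_eq_zero {f : 𝕜 → 𝔸} {x : 𝕜} {k : ℕ} (hf : ContDiffAt 𝕜 ⊤ f x)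
    (hfk : ∀ i < k, iteratedDeriv i f x = 0) (N : ℕ) :
    ∀ i < k * N, iteratedDeriv i (f ^ N) x = 0 := by
  induction N with
  | zero => simp
  | succ N ih =>
    intro i hi
    rw [pow_succ]
    exact iteratedDeriv_mul_eq_zero ((hf.pow N).of_le le_top) (hf.of_le le_top) ih hfk
      (by rwa [Nat.mul_succ] at hi)

end Leibniz

lemma iteratedDeriv_ofReal_comp {f : ℝ → ℝ} {x : ℝ} {n : ℕ} (hf : ContDiffAt ℝ n f x) :
    iteratedDeriv n (fun t => (f t : ℂ)) x = iteratedDeriv n f x := by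
  rw [iteratedDeriv_eq_iteratedFDeriv, iteratedDeriv_eq_iteratedFDeriv,
    show (fun t => (f t : ℂ)) = Complex.ofRealCLM ∘ f from rfl,
    Complex.ofRealCLM.iteratedFDeriv_comp_left hf le_rfl]
  rfl

lemma norm_le_of_iteratedDeriv_eq_zero_s1 {E : Type*} [NormedAddCommGroup E] [NormedSpace ℝ E]
    {f : ℝ → E} {a t C : ℝ} {m : ℕ} (hf : ContDiff ℝ (m + 1) f)
    (hzero : ∀ i ≤ m, iteratedDeriv i f a = 0)
    (hC : ∀ y ∈ Set.Icc a t, ‖iteratedDeriv (m + 1) f y‖ ≤ C) (hat : a ≤ t) :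
    ‖f t‖ ≤ C * (t - a) ^ (m + 1) / m.factorial := by
  rcases hat.eq_or_lt with rfl | hat
  · simpa using hzero 0 (Nat.zero_le m)
  have hwithin : ∀ i ≤ m + 1, ∀ y ∈ Set.Icc a t,
      iteratedDerivWithin i f (Set.Icc a t) y = iteratedDeriv i f y := fun i hi y hy =>
    iteratedDerivWithin_eq_iteratedDeriv (uniqueDiffOn_Icc hat)
      (hf.contDiffAt.of_le (by exact_mod_cast hi)) hy
  have htaylor := taylor_mean_remainder_bound hat.le hf.contDiffOn (Set.right_mem_Icc.2 hat.le)
    fun y hy => (hwithin (m + 1) le_rfl y hy).symm ▸ hC y hy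
  have hpoly : taylorWithinEval f m (Set.Icc a t) a t = 0 := by
    rw [taylor_within_apply]
    refine sum_eq_zero fun i hi => ?_
    have hi : i ≤ m := Nat.lt_succ_iff.mp (mem_range.mp hi)
    rw [hwithin i (by omega) a (Set.left_mem_Icc.2 hat.le), hzero i hi, smul_zero]
  rwa [hpoly, sub_zero] at htaylor

lemma inv_factorial_le_exp_one_div_pow {K : ℕ} (hK : 0 < K) :
    (K.factorial : ℝ)⁻¹ ≤ (exp 1 / K) ^ K := by
  have h := pow_div_factorial_le_exp (K : ℝ) (Nat.cast_nonneg K) K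
  rw [← exp_one_pow, div_le_iff₀ (by positivity)] at h
  rwa [div_pow, inv_le_iff_one_le_mul₀ (by positivity), div_mul_eq_mul_div,
    le_div_iff₀ (by positivity), one_mul]

lemma tendsto_mul_mul_pow_atTop_zero (A B : ℝ) {q : ℝ} (hq : |q| < 1) :
    Filter.Tendsto (fun N : ℕ => A * N * (B * N + 1) * q ^ N) Filter.atTop (nhds 0) := by
  have h := ((tendsto_pow_const_mul_const_pow_of_abs_lt_one 2 hq).const_mul (A * B)).add
    ((tendsto_pow_const_mul_const_pow_of_abs_lt_one 1 hq).const_mul A)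
  rw [mul_zero, mul_zero, add_zero] at h
  exact h.congr fun N => by ring

noncomputable def expMode (m : ℤ) (t : ℝ) : ℂ := Complex.exp (m * t * Complex.I)

lemma expMode_zero : expMode 0 = 1 := by
  ext t
  simp [expMode]

lemma expMode_add (a b : ℤ) (t : ℝ) : expMode (a + b) t = expMode a t * expMode b t := by
  simp only [expMode, ← Complex.exp_add]
  push_cast
  ring_nf

lemma norm_expMode (m : ℤ) (t : ℝ) : ‖expMode m t‖ = 1 := by
  simpa [expMode] using Complex.norm_exp_ofReal_mul_I (m * t)

lemma hasDerivAt_expMode (m : ℤ) (t : ℝ) :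
    HasDerivAt (expMode m) (m * Complex.I * expMode m t) t := by
  have := (((hasDerivAt_id t).ofReal_comp.const_mul (m : ℂ)).mul_const Complex.I).cexp
  simp only [id, Complex.ofReal_one, mul_one] at this
  unfold expMode
  convert this using 1
  ring

lemma contDiff_expMode (m : ℤ) : ContDiff ℝ ⊤ (expMode m) :=
  Complex.contDiff_exp.comp
    ((contDiff_const.mul Complex.ofRealCLM.contDiff).mul contDiff_const)

lemma iteratedDeriv_expMode (m : ℤ) (j : ℕ) :
    iteratedDeriv j (expMode m) = fun t => (m * Complex.I) ^ j * expMode m t := by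
  induction j with
  | zero => simp
  | succ j ih =>
    ext t
    rw [iteratedDeriv_succ, ih, ((hasDerivAt_expMode m t).const_mul _).deriv]
    ring

lemma integral_expMode (m : ℤ) :
    ∫ t in (0 : ℝ)..2 * π, expMode m t = if m = 0 then (2 * π : ℂ) else 0 := by
  split_ifs with hm
  · simp [hm, expMode]
  · have hc : (m : ℂ) * Complex.I ≠ 0 := by simpa using hm
    have hper : Complex.exp (m * Complex.I * (2 * π : ℝ)) = 1 := by
      rw [← Complex.exp_int_mul_two_pi_mul_I m]
      push_cast
      ring_nf
    simp only [expMode, mul_right_comm _ _ Complex.I]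
    rw [integral_exp_mul_complex hc, hper]
    simp

noncomputable def trigDegreeLE (d : ℕ) : Submodule ℂ (ℝ → ℂ) :=
  Submodule.span ℂ (expMode '' Set.Icc (-(d : ℤ)) d)

lemma expMode_mem_trigDegreeLE {d : ℕ} {m : ℤ} (hm : m ∈ Set.Icc (-(d : ℤ)) d) :
    expMode m ∈ trigDegreeLE d :=
  Submodule.subset_span ⟨m, hm, rfl⟩

lemma mul_mem_trigDegreeLE {d e : ℕ} {f g : ℝ → ℂ} (hf : f ∈ trigDegreeLE d)
    (hg : g ∈ trigDegreeLE e) : f * g ∈ trigDegreeLE (d + e) := by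
  have h := Submodule.mul_mem_mul hf hg
  rw [trigDegreeLE, trigDegreeLE, Submodule.span_mul_span] at h
  refine Submodule.span_mono ?_ h
  rintro _ ⟨_, ⟨a, ha, rfl⟩, _, ⟨b, hb, rfl⟩, rfl⟩
  refine ⟨a + b, ?_, funext fun t => expMode_add a b t⟩
  simp only [Set.mem_Icc] at ha hb ⊢
  push_cast
  omega

lemma pow_mem_trigDegreeLE {d : ℕ} {f : ℝ → ℂ} (hf : f ∈ trigDegreeLE d) (N : ℕ) :
    f ^ N ∈ trigDegreeLE (d * N) := by
  induction N with
  | zero => simpa [← expMode_zero] using expMode_mem_trigDegreeLE (d := 0) (m := 0) (by simp)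
  | succ N ih => simpa [pow_succ, mul_add] using mul_mem_trigDegreeLE ih hf

lemma contDiff_of_mem_trigDegreeLE {d : ℕ} {f : ℝ → ℂ} (hf : f ∈ trigDegreeLE d) :
    ContDiff ℝ ⊤ f := by
  induction hf using Submodule.span_induction with
  | mem g hg =>
    obtain ⟨m, -, rfl⟩ := hg
    exact contDiff_expMode m
  | zero => exact contDiff_const
  | add g h _ _ hg hh => exact hg.add hh
  | smul c g _ hg => exact hg.const_smul c

lemma ofReal_cos_mem_trigDegreeLE {d j : ℕ} (hj : j ≤ d) :
    (fun t : ℝ => (Real.cos (j * t) : ℂ)) ∈ trigDegreeLE d := by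
  have h : (fun t : ℝ => (Real.cos (j * t) : ℂ)) = (2⁻¹ : ℂ) • (expMode j + expMode (-j)) := by
    ext t
    simp only [Pi.smul_apply, Pi.add_apply, smul_eq_mul, expMode, Complex.ofReal_cos]
    push_cast
    have h2 := Complex.two_cos (j * t)
    simp only [neg_mul] at h2 ⊢
    linear_combination (2⁻¹ : ℂ) * h2
  rw [h]
  exact Submodule.smul_mem _ _ (Submodule.add_mem _
    (expMode_mem_trigDegreeLE (by simp; omega)) (expMode_mem_trigDegreeLE (by simp; omega)))

lemma ofReal_sin_mem_trigDegreeLE {d j : ℕ} (hj : j ≤ d) :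
    (fun t : ℝ => (Real.sin (j * t) : ℂ)) ∈ trigDegreeLE d := by
  have h : (fun t : ℝ => (Real.sin (j * t) : ℂ))
      = (Complex.I / 2) • (expMode (-j) - expMode j) := by
    ext t
    simp only [Pi.smul_apply, Pi.sub_apply, smul_eq_mul, expMode, Complex.ofReal_sin]
    push_cast
    have h2 := Complex.two_sin (j * t)
    simp only [neg_mul] at h2 ⊢
    linear_combination (2⁻¹ : ℂ) * h2
  rw [h]
  exact Submodule.smul_mem _ _ (Submodule.sub_mem _
    (expMode_mem_trigDegreeLE (by simp; omega)) (expMode_mem_trigDegreeLE (by simp; omega)))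

lemma ofReal_trigPoly_mem_trigDegreeLE (n : ℕ) (a b : ℕ → ℝ) :
    (fun t : ℝ => ((a 0 + ∑ j ∈ Icc 1 n, (a j * Real.cos (j * t) + b j * Real.sin (j * t)) : ℝ)
      : ℂ)) ∈ trigDegreeLE n := by
  have h : (fun t : ℝ => ((a 0 + ∑ j ∈ Icc 1 n,
      (a j * Real.cos (j * t) + b j * Real.sin (j * t)) : ℝ) : ℂ))
      = (a 0 : ℂ) • expMode 0 + ∑ j ∈ Icc 1 n, ((a j : ℂ) • (fun t : ℝ => (Real.cos (j * t) : ℂ))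
        + (b j : ℂ) • (fun t : ℝ => (Real.sin (j * t) : ℂ))) := by
    ext t
    simp [expMode_zero]
  rw [h]
  refine Submodule.add_mem _ (Submodule.smul_mem _ _ (expMode_mem_trigDegreeLE (by simp)))
    (Submodule.sum_mem _ fun j hj => ?_)
  have hjn : j ≤ n := (Finset.mem_Icc.mp hj).2
  exact Submodule.add_mem _ (Submodule.smul_mem _ _ (ofReal_cos_mem_trigDegreeLE hjn))
    (Submodule.smul_mem _ _ (ofReal_sin_mem_trigDegreeLE hjn))

noncomputable def trigCoeff (f : ℝ → ℂ) (m : ℤ) : ℂ :=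
  (2 * π : ℂ)⁻¹ * ∫ t in (0 : ℝ)..2 * π, expMode (-m) t * f t

lemma trigCoeff_sum_smul_expMode (s : Finset ℤ) (c : ℤ → ℂ) (m : ℤ) :
    trigCoeff (∑ j ∈ s, c j • expMode j) m = if m ∈ s then c m else 0 := by
  have hintegrand : ∀ t, expMode (-m) t * (∑ j ∈ s, c j • expMode j) t
      = ∑ j ∈ s, c j * expMode (j - m) t := by
    intro t
    simp only [Finset.sum_apply, Pi.smul_apply, smul_eq_mul, Finset.mul_sum, sub_eq_add_neg,
      expMode_add]
    exact Finset.sum_congr rfl fun j _ => by ring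
  have hint : ∀ j ∈ s, IntervalIntegrable (fun t => c j * expMode (j - m) t)
      MeasureTheory.volume 0 (2 * π) := fun j _ =>
    (continuous_const.mul (contDiff_expMode _).continuous).intervalIntegrable _ _
  simp only [trigCoeff, hintegrand, intervalIntegral.integral_finsetSum hint,
    intervalIntegral.integral_const_mul, integral_expMode, sub_eq_zero, mul_ite, mul_zero,
    Finset.sum_ite_eq']
  split_ifs
  · field_simp
  · simp

lemma norm_trigCoeff_le {f : ℝ → ℂ} {M : ℝ} (hf : ∀ t ∈ Set.Icc 0 (2 * π), ‖f t‖ ≤ M)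
    (m : ℤ) : ‖trigCoeff f m‖ ≤ M := by
  have h : ‖∫ t in (0 : ℝ)..2 * π, expMode (-m) t * f t‖ ≤ M * |2 * π - 0| := by
    refine intervalIntegral.norm_integral_le_of_norm_le_const fun t ht => ?_
    rw [Set.uIoc_of_le (by positivity)] at ht
    rw [norm_mul, norm_expMode, one_mul]
    exact hf t (Set.Ioc_subset_Icc_self ht)
  have h2π : ‖(2 * π : ℂ)‖ = 2 * π := by simp [abs_of_pos pi_pos]
  rw [trigCoeff, norm_mul, norm_inv, h2π, inv_mul_le_iff₀ (by positivity)]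
  simpa [abs_of_pos pi_pos, mul_comm] using h

lemma eq_sum_trigCoeff_of_mem {d : ℕ} {f : ℝ → ℂ} (hf : f ∈ trigDegreeLE d) :
    f = ∑ m ∈ Icc (-(d : ℤ)) d, trigCoeff f m • expMode m := by
  obtain ⟨c, hc, rfl⟩ := (Finsupp.mem_span_image_iff_linearCombination ℂ).1 hf
  rw [Finsupp.linearCombination_apply_of_mem_supported ℂ (s := Icc (-(d : ℤ)) d)
    (by simpa using hc)]
  refine Finset.sum_congr rfl fun m hm => ?_
  rw [trigCoeff_sum_smul_expMode, if_pos hm]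

lemma norm_iteratedDeriv_le_of_mem {d : ℕ} {f : ℝ → ℂ} (hf : f ∈ trigDegreeLE d) {M : ℝ}
    (hM : ∀ t ∈ Set.Icc 0 (2 * π), ‖f t‖ ≤ M) (j : ℕ) (s : ℝ) :
    ‖iteratedDeriv j f s‖ ≤ (2 * d + 1) * d ^ j * M := by
  have hterm : ∀ m ∈ Icc (-(d : ℤ)) d,
      ‖iteratedDeriv j (trigCoeff f m • expMode m) s‖ ≤ d ^ j * M := by
    intro m hm
    have hmd : ‖(m : ℂ)‖ ≤ d := by
      rw [Complex.norm_intCast, abs_le]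
      simp only [Finset.mem_Icc] at hm
      exact ⟨by exact_mod_cast hm.1, by exact_mod_cast hm.2⟩
    rw [iteratedDeriv_const_smul_field, iteratedDeriv_expMode, norm_smul, norm_mul, norm_pow,
      norm_mul, Complex.norm_I, mul_one, norm_expMode, mul_one, mul_comm]
    exact mul_le_mul (pow_le_pow_left₀ (norm_nonneg _) hmd j) (norm_trigCoeff_le hM m)
      (norm_nonneg _) (by positivity)
  rw [eq_sum_trigCoeff_of_mem hf,
    iteratedDeriv_sum (f := fun m => trigCoeff f m • expMode m) fun m _ =>
    (((contDiff_expMode m).const_smul (trigCoeff f m)).of_le le_top).contDiffAt]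
  calc ‖∑ m ∈ Icc (-(d : ℤ)) d, iteratedDeriv j (trigCoeff f m • expMode m) s‖
      ≤ ∑ m ∈ Icc (-(d : ℤ)) d, (d : ℝ) ^ j * M := (norm_sum_le _ _).trans (sum_le_sum hterm)
    _ = (2 * d + 1) * d ^ j * M := by
      rw [sum_const, Int.card_Icc, nsmul_eq_mul, mul_assoc]
      congr 1
      norm_cast
      omega

lemma norm_le_of_mem_trigDegreeLE_of_iteratedDeriv_eq_zero {d K : ℕ} {f : ℝ → ℂ}
    (hf : f ∈ trigDegreeLE d) {M : ℝ} (hM : ∀ t ∈ Set.Icc 0 (2 * π), ‖f t‖ ≤ M) (hK : 0 < K)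
    (hzero : ∀ i < K, iteratedDeriv i f 0 = 0) {t : ℝ} (ht : 0 ≤ t) :
    ‖f t‖ ≤ K * (2 * d + 1) * M * (exp 1 * d * t / K) ^ K := by
  obtain ⟨m, rfl⟩ : ∃ m, K = m + 1 := Nat.exists_eq_succ_of_ne_zero hK.ne'
  have hM0 : 0 ≤ M := (norm_nonneg _).trans (hM 0 ⟨le_rfl, two_pi_pos.le⟩)
  have htaylor := norm_le_of_iteratedDeriv_eq_zero_s1
    ((contDiff_of_mem_trigDegreeLE hf).of_le le_top) (fun i hi => hzero i (Nat.lt_succ_of_le hi))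
    (fun y _ => norm_iteratedDeriv_le_of_mem hf hM (m + 1) y) ht
  calc ‖f t‖ ≤ (2 * d + 1) * d ^ (m + 1) * M * (t - 0) ^ (m + 1) / m.factorial := htaylor
    _ = (m + 1 : ℕ) * (2 * d + 1) * M * (d * t) ^ (m + 1) * ((m + 1).factorial : ℝ)⁻¹ := by
      rw [Nat.factorial_succ]
      push_cast
      field_simp
      ring
    _ ≤ (m + 1 : ℕ) * (2 * d + 1) * M * (d * t) ^ (m + 1) * (exp 1 / (m + 1 : ℕ)) ^ (m + 1) := by
      gcongr
      exact inv_factorial_le_exp_one_div_pow m.succ_pos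
    _ = (m + 1 : ℕ) * (2 * d + 1) * M * (exp 1 * d * t / (m + 1 : ℕ)) ^ (m + 1) := by
      ring

lemma order_le_exp_one_mul_degree_mul_of_isMaxOn {d k : ℕ} {f : ℝ → ℂ}
    (hf : f ∈ trigDegreeLE d) (hf0 : f ≠ 0) (hk : 0 < k)
    (hzero : ∀ i < k, iteratedDeriv i f 0 = 0) {t₀ : ℝ} (ht₀ : 0 ≤ t₀)
    (hmax : IsMaxOn (fun t => ‖f t‖) (Set.Icc 0 (2 * π)) t₀) :
    (k : ℝ) ≤ exp 1 * d * t₀ := by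
  set M := ‖f t₀‖
  have hM : ∀ t ∈ Set.Icc 0 (2 * π), ‖f t‖ ≤ M := isMaxOn_iff.1 hmax
  have hMpos : 0 < M := by
    obtain ⟨t, ht⟩ := Function.ne_iff.1 hf0
    by_contra! hM0
    have hft := norm_iteratedDeriv_le_of_mem hf hM 0 t
    rw [iteratedDeriv_zero, pow_zero, mul_one] at hft
    exact ht (norm_le_zero_iff.1 (hft.trans (mul_nonpos_of_nonneg_of_nonpos (by positivity) hM0)))
  by_contra! hlt
  set r := exp 1 * d * t₀ / k
  have hr : 0 ≤ r ∧ r < 1 := ⟨by positivity, (div_lt_one (by positivity)).2 hlt⟩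
  have hq : |r ^ k| < 1 := by
    rw [abs_of_nonneg (pow_nonneg hr.1 k)]
    exact pow_lt_one₀ hr.1 hr.2 hk.ne'
  obtain ⟨N, hN1, hN⟩ := (((tendsto_mul_mul_pow_atTop_zero k (2 * d) hq).eventually
    (gt_mem_nhds one_pos)).and (Filter.eventually_gt_atTop 0)).exists
  have hpow := norm_le_of_mem_trigDegreeLE_of_iteratedDeriv_eq_zero (pow_mem_trigDegreeLE hf N)
    (M := M ^ N)
    (fun t ht => by simpa [norm_pow] using pow_le_pow_left₀ (norm_nonneg _) (hM t ht) N)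
    (K := k * N) (by positivity)
    (iteratedDeriv_pow_eq_zero (contDiff_of_mem_trigDegreeLE hf).contDiffAt hzero N) ht₀
  have hr' : exp 1 * (d * N : ℕ) * t₀ / (k * N : ℕ) = r := by
    simp only [r]
    push_cast
    field_simp
  rw [Pi.pow_apply, norm_pow, hr', pow_mul] at hpow
  have hle : M ^ N * 1 ≤ M ^ N * (k * N * (2 * d * N + 1) * (r ^ k) ^ N) := by
    push_cast at hpow
    linarith
  linarith [le_of_mul_le_mul_left hle (pow_pos hMpos N)]

theorem trig_poly_zero_order_max_dist_b_general
    (n k : ℕ) (hk : 0 < k)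
    (Q : ℝ → ℝ) (a b : ℕ → ℝ)
    (hQ : ∀ t, Q t = a 0 + ∑ j ∈ Finset.Icc 1 n,
        (a j * Real.cos (j * t) + b j * Real.sin (j * t)))
    (hQne : ∃ t, Q t ≠ 0)
    (hzero : ∀ i < k, iteratedDeriv i Q 0 = 0)
    (t₀ : ℝ) (ht₀ : t₀ ∈ Set.Icc 0 (2 * π))
    (hmax : ∀ t ∈ Set.Icc 0 (2 * π), |Q t| ≤ |Q t₀|) :
    (k : ℝ) / (Real.exp 1 * n) ≤ t₀ := by
  set Qc : ℝ → ℂ := fun t => (Q t : ℂ)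
  have hQc : Qc ∈ trigDegreeLE n := by
    simpa only [Qc, hQ] using ofReal_trigPoly_mem_trigDegreeLE n a b
  have hQc0 : Qc ≠ 0 := by
    obtain ⟨t, ht⟩ := hQne
    exact Function.ne_iff.2 ⟨t, by simpa [Qc] using ht⟩
  have hQsmooth : ContDiff ℝ ⊤ Q := by
    simpa [Qc, Function.comp_def] using
      Complex.reCLM.contDiff.comp (contDiff_of_mem_trigDegreeLE hQc)
  have hQczero : ∀ i < k, iteratedDeriv i Qc 0 = 0 := fun i hi => by
    rw [iteratedDeriv_ofReal_comp (hQsmooth.of_le le_top).contDiffAt, hzero i hi,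
      Complex.ofReal_zero]
  have hQcmax : IsMaxOn (fun t => ‖Qc t‖) (Set.Icc 0 (2 * π)) t₀ :=
    isMaxOn_iff.2 fun t ht => by simpa [Qc] using hmax t ht
  refine div_le_of_le_mul₀ (by positivity) ht₀.1 ?_
  rw [mul_comm t₀]
  exact order_le_exp_one_mul_degree_mul_of_isMaxOn hQc hQc0 hk hQczero ht₀.1 hQcmax

theorem trig_poly_zero_order_max_dist_b
    (n k : ℕ) (hn : 0 < n) (hk : 0 < k)
    (Q : ℝ → ℝ) (a b : ℕ → ℝ)
    (hQ : ∀ t, Q t = a 0 + ∑ j ∈ Finset.Icc 1 n,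
        (a j * Real.cos (j * t) + b j * Real.sin (j * t)))
    (hQne : ∃ t, Q t ≠ 0)
    (hzero : ∀ i < k, iteratedDeriv i Q 0 = 0)
    (t₀ : ℝ) (ht₀ : t₀ ∈ Set.Icc 0 (2 * π))
    (hmax : ∀ t ∈ Set.Icc 0 (2 * π), |Q t| ≤ |Q t₀|) :
    (k : ℝ) / (Real.exp 1 * n) ≤ t₀ :=
  trig_poly_zero_order_max_dist_b_general n k hk Q a b hQ hQne hzero t₀ ht₀ hmax
end

section
/- For any d linearly independent unit vectors v₁, ..., v_d ∈ ℂ^d, there exists a unit vector q ∈ ℂ^d such that for every i, |⟨v_i, q⟩| ≤ 1/√d; equivalently, the Euclidean distance from q to the complex line spanned by each v_i is at least √((d−1)/d). -/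
/-!
Let `w` be the basis dual to `v`, i.e. `⟪w i, v j⟫ = δᵢⱼ`; then `‖w i‖ ≥ 1` by Cauchy–Schwarz.
Choosing unimodular phases `ε i` one at a time, so that each new term has nonnegative real inner
product with the partial sum before it, gives `‖∑ ε i • w i‖² ≥ ∑ ‖w i‖² ≥ d`, while
`⟪v i, ∑ ε j • w j⟫ = ε i` has modulus `1`. The normalized sum is the required `q`.
-/

open Finset

theorem RCLike.exists_norm_eq_one_mul_eq_norm {𝕜 : Type*} [RCLike 𝕜] (c : 𝕜) :
    ∃ z : 𝕜, ‖z‖ = 1 ∧ z * c = ‖c‖ := by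
  rcases eq_or_ne c 0 with rfl | hc
  · exact ⟨1, by simp, by simp⟩
  · have hc' : (‖c‖ : 𝕜) ≠ 0 := by simpa using hc
    refine ⟨starRingEnd 𝕜 c / ‖c‖, ?_, ?_⟩
    · rw [norm_div, RCLike.norm_conj, RCLike.norm_ofReal, abs_norm,
        div_self (norm_ne_zero_iff.mpr hc)]
    · rw [div_mul_eq_mul_div, RCLike.conj_mul, sq, mul_div_assoc, div_self hc', mul_one]

section Phases

variable {𝕜 E ι : Type*} [RCLike 𝕜] [NormedAddCommGroup E] [InnerProductSpace 𝕜 E]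

theorem exists_norm_eq_one_sum_norm_sq_le_norm_sum_smul_sq (s : Finset ι) (w : ι → E) :
    ∃ ε : ι → 𝕜, (∀ i, ‖ε i‖ = 1) ∧ ∑ i ∈ s, ‖w i‖ ^ 2 ≤ ‖∑ i ∈ s, ε i • w i‖ ^ 2 := by
  classical
  induction s using Finset.cons_induction with
  | empty => exact ⟨fun _ => 1, fun _ => by simp, by simp⟩
  | cons a t ha ih =>
    obtain ⟨ε, hε, hsum⟩ := ih
    set S := ∑ i ∈ t, ε i • w i
    obtain ⟨z, hz, hzS⟩ := RCLike.exists_norm_eq_one_mul_eq_norm (inner 𝕜 S (w a))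
    have hupdate : ∑ i ∈ t, Function.update ε a z i • w i = S :=
      sum_congr rfl fun i hi => by rw [Function.update_of_ne (ne_of_mem_of_not_mem hi ha)]
    have hcross : 0 ≤ RCLike.re (inner 𝕜 S (z • w a)) := by
      rw [inner_smul_right, hzS, RCLike.ofReal_re]
      exact norm_nonneg _
    refine ⟨Function.update ε a z, fun i => ?_, ?_⟩
    · rcases eq_or_ne i a with rfl | hi
      · simpa using hz
      · simpa [Function.update_of_ne hi] using hε i
    · rw [sum_cons, sum_cons, Function.update_self, hupdate, add_comm _ S, norm_add_sq (𝕜 := 𝕜),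
        norm_smul, hz, one_mul]
      linarith

variable [Fintype ι] [Nonempty ι] [DecidableEq ι]

theorem exists_norm_eq_one_norm_inner_le_of_inner_eq_ite (v w : ι → E) (hv : ∀ i, ‖v i‖ = 1)
    (hvw : ∀ i j, inner 𝕜 (w i) (v j) = if i = j then 1 else 0) :
    ∃ q : E, ‖q‖ = 1 ∧ ∀ i, ‖(inner 𝕜 (v i) q : 𝕜)‖ ≤ 1 / Real.sqrt (Fintype.card ι) := by
  have hw : ∀ i, 1 ≤ ‖w i‖ := fun i => by
    simpa [hvw, hv] using norm_inner_le_norm (𝕜 := 𝕜) (w i) (v i)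
  obtain ⟨ε, hε, hsum⟩ := exists_norm_eq_one_sum_norm_sq_le_norm_sum_smul_sq (𝕜 := 𝕜) univ w
  set S := ∑ i, ε i • w i
  have hvS : ∀ i, inner 𝕜 (v i) S = ε i := fun i => by
    have hvw' : ∀ j, inner 𝕜 (v i) (w j) = if j = i then 1 else 0 := fun j => by
      rw [← inner_conj_symm, hvw]; split_ifs <;> simp
    simp [S, inner_sum, inner_smul_right, hvw']
  have hcard : (Fintype.card ι : ℝ) ≤ ‖S‖ ^ 2 :=
    calc (Fintype.card ι : ℝ) = ∑ _i : ι, (1 : ℝ) ^ 2 := by simp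
      _ ≤ ∑ i, ‖w i‖ ^ 2 := sum_le_sum fun i _ => pow_le_pow_left₀ zero_le_one (hw i) 2
      _ ≤ ‖S‖ ^ 2 := hsum
  have hsqrt : Real.sqrt (Fintype.card ι) ≤ ‖S‖ := (Real.sqrt_le_left (norm_nonneg _)).mpr hcard
  have hsqrt_pos : 0 < Real.sqrt (Fintype.card ι) :=
    Real.sqrt_pos.mpr (by exact_mod_cast Fintype.card_pos)
  have hS : S ≠ 0 := norm_pos_iff.mp (hsqrt_pos.trans_le hsqrt)
  refine ⟨(‖S‖⁻¹ : 𝕜) • S, norm_smul_inv_norm hS, fun i => ?_⟩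
  rw [inner_smul_right, hvS, norm_mul, hε, mul_one, norm_inv, RCLike.norm_ofReal, abs_norm,
    one_div]
  exact inv_anti₀ hsqrt_pos hsqrt

end Phases

theorem Module.Basis.exists_inner_eq_ite {𝕜 E ι : Type*} [RCLike 𝕜] [NormedAddCommGroup E]
    [InnerProductSpace 𝕜 E] [FiniteDimensional 𝕜 E] [DecidableEq ι] (b : Module.Basis ι 𝕜 E) :
    ∃ w : ι → E, ∀ i j, inner 𝕜 (w i) (b j) = if i = j then 1 else 0 := by
  have := FiniteDimensional.complete 𝕜 E
  refine ⟨fun i => (InnerProductSpace.toDual 𝕜 E).symm (LinearMap.toContinuousLinearMap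
    (b.coord i)), fun i j => ?_⟩
  simp [InnerProductSpace.toDual_symm_apply, Finsupp.single_apply, eq_comm]

theorem unit_vector_small_inner_with_basis
    (d : ℕ) (hd : 0 < d)
    (v : Fin d → EuclideanSpace ℂ (Fin d))
    (hv : ∀ i, ‖v i‖ = 1) (hind : LinearIndependent ℂ v) :
    ∃ q : EuclideanSpace ℂ (Fin d), ‖q‖ = 1 ∧
      ∀ i, ‖(inner ℂ (v i) q : ℂ)‖ ≤ 1 / Real.sqrt d := by
  have : Nonempty (Fin d) := ⟨⟨0, hd⟩⟩
  have hcard : Fintype.card (Fin d) = Module.finrank ℂ (EuclideanSpace ℂ (Fin d)) := by simp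
  obtain ⟨w, hw⟩ := (basisOfLinearIndependentOfCardEqFinrank hind hcard).exists_inner_eq_ite
  rw [coe_basisOfLinearIndependentOfCardEqFinrank] at hw
  simpa using exists_norm_eq_one_norm_inner_le_of_inner_eq_ite v w hv hw
end

section
/- Let v₁, ..., v_d be a basis of ℂ^d consisting of unit vectors, and let w₁, ..., w_d be the dual basis, i.e., ⟨v_i, w_j⟩ = δ_{ij}. Then there exist complex numbers f₁, ..., f_d of modulus 1 such that |f₁w₁ + ... + f_d w_d| ≥ √d. -/
/-! Instead of averaging over random unimodular coefficients, choose signs greedily: by the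
parallelogram law, `‖x + y‖² + ‖x - y‖² = 2 (‖x‖² + ‖y‖²)`, so one of `x ± y` has squared norm at
least `‖x‖² + ‖y‖²`. Adding the `wᵢ` one at a time thus gives `‖∑ fᵢ wᵢ‖² ≥ ∑ ‖wᵢ‖² ≥ d`, since
`1 = ⟨vᵢ, wᵢ⟩ ≤ ‖vᵢ‖ ‖wᵢ‖ = ‖wᵢ‖`. -/

open Finset

section SignChoice

variable {𝕜 E : Type*} [RCLike 𝕜] [NormedAddCommGroup E] [InnerProductSpace 𝕜 E]

theorem exists_norm_eq_one_norm_sq_add_le (x y : E) :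
    ∃ ε : 𝕜, ‖ε‖ = 1 ∧ ‖x‖ ^ 2 + ‖y‖ ^ 2 ≤ ‖x + ε • y‖ ^ 2 := by
  have hpar := parallelogram_law_with_norm 𝕜 x y
  by_cases hplus : ‖x‖ ^ 2 + ‖y‖ ^ 2 ≤ ‖x + y‖ ^ 2
  · exact ⟨1, norm_one, by rwa [one_smul]⟩
  · refine ⟨-1, by rw [norm_neg, norm_one], ?_⟩
    rw [neg_one_smul, ← sub_eq_add_neg]
    nlinarith

theorem exists_norm_eq_one_sum_norm_sq_le {ι : Type*} (s : Finset ι) (x : ι → E) :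
    ∃ f : ι → 𝕜, (∀ i, ‖f i‖ = 1) ∧ ∑ i ∈ s, ‖x i‖ ^ 2 ≤ ‖∑ i ∈ s, f i • x i‖ ^ 2 := by
  classical
  induction s using Finset.induction_on with
  | empty => exact ⟨fun _ => 1, fun _ => norm_one, by simp⟩
  | insert a s has ih =>
    obtain ⟨f, hf_norm, hf⟩ := ih
    obtain ⟨ε, hε_norm, hε⟩ :=
      exists_norm_eq_one_norm_sq_add_le (𝕜 := 𝕜) (∑ i ∈ s, f i • x i) (x a)
    refine ⟨Function.update f a ε, fun i => ?_, ?_⟩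
    · rcases eq_or_ne i a with rfl | hi
      · rwa [Function.update_self]
      · rw [Function.update_of_ne hi, hf_norm]
    · have hsum : ∑ i ∈ s, Function.update f a ε i • x i = ∑ i ∈ s, f i • x i :=
        sum_congr rfl fun i hi => by rw [Function.update_of_ne (ne_of_mem_of_not_mem hi has)]
      rw [sum_insert has, sum_insert has, Function.update_self, hsum, add_comm (ε • x a)]
      linarith

end SignChoice

theorem one_le_norm_of_inner_eq_one {𝕜 E : Type*} [RCLike 𝕜] [NormedAddCommGroup E]
    [InnerProductSpace 𝕜 E] {v w : E} (hv : ‖v‖ = 1) (hvw : inner 𝕜 v w = 1) : 1 ≤ ‖w‖ := by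
  simpa [hvw, hv] using norm_inner_le_norm (𝕜 := 𝕜) v w

theorem steinhaus_combination_of_dual_basis_general
    (d : ℕ) (v w : Fin d → EuclideanSpace ℂ (Fin d))
    (hv : ∀ i, ‖v i‖ = 1)
    (hdual : ∀ i j, (inner ℂ (v i) (w j) : ℂ) = if i = j then 1 else 0) :
    ∃ f : Fin d → ℂ, (∀ i, ‖f i‖ = 1) ∧
      Real.sqrt d ≤ ‖∑ i, f i • w i‖ := by
  obtain ⟨f, hf_norm, hf⟩ := exists_norm_eq_one_sum_norm_sq_le (𝕜 := ℂ) univ w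
  have hw : ∀ i, 1 ≤ ‖w i‖ := fun i =>
    one_le_norm_of_inner_eq_one (hv i) (by rw [hdual, if_pos rfl])
  have hd : (d : ℝ) ≤ ‖∑ i, f i • w i‖ ^ 2 :=
    calc (d : ℝ) = ∑ _i : Fin d, (1 : ℝ) := by simp
      _ ≤ ∑ i, ‖w i‖ ^ 2 := sum_le_sum fun i _ => one_le_pow₀ (hw i)
      _ ≤ ‖∑ i, f i • w i‖ ^ 2 := hf
  exact ⟨f, hf_norm, Real.sqrt_le_sqrt hd |>.trans_eq (Real.sqrt_sq (norm_nonneg _))⟩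

theorem steinhaus_combination_of_dual_basis
    (d : ℕ) (v w : Fin d → EuclideanSpace ℂ (Fin d))
    (hv : ∀ i, ‖v i‖ = 1) (hbasis : LinearIndependent ℂ v)
    (hdual : ∀ i j, (inner ℂ (v i) (w j) : ℂ) = if i = j then 1 else 0) :
    ∃ f : Fin d → ℂ, (∀ i, ‖f i‖ = 1) ∧
      Real.sqrt d ≤ ‖∑ i, f i • w i‖ :=
  steinhaus_combination_of_dual_basis_general d v w hv hdual
end

section
/- Let P be a nonzero complex polynomial in one variable of degree n and R > 0 with n ≤ R². Then the function F(z) = e^{−|z|²/2}|P(z)| on ℂ attains its global maximum at a point z with |z| ≤ R. -/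
/-!
Let `M` be the maximum of `F` on the closed disk of radius `R`, so `|P| ≤ e^{R²/2} M` on the
circle `|z| = R`. The reversed polynomial `z ↦ zⁿ P(1/z)` is entire, so the maximum modulus
principle on the disk of radius `1/R` gives `|P(w)| ≤ e^{R²/2} M (|w|/R)ⁿ` for `|w| ≥ R`.
Since `n ≤ R²`, `(s/R)ⁿ ≤ e^{(s² - R²)/2}` for `s ≥ R`, hence `F(w) ≤ M` outside the disk too.
-/

open Polynomial Metric

theorem Polynomial.eval_eq_eval_reverse_inv_mul_pow {K : Type*} [Field K] (P : K[X]) {w : K}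
    (hw : w ≠ 0) : P.eval w = P.reverse.eval w⁻¹ * w ^ P.natDegree := by
  have : Invertible w := invertibleOfNonzero hw
  simpa only [invOf_eq_inv, eval₂_id] using (eval₂_reverse_mul_pow (RingHom.id K) w P).symm

theorem Polynomial.norm_eval_le_mul_div_pow_of_norm_le_on_sphere (P : ℂ[X]) {R M : ℝ}
    (hR : 0 < R) (hM : ∀ v : ℂ, ‖v‖ = R → ‖P.eval v‖ ≤ M) {w : ℂ} (hw : R ≤ ‖w‖) :
    ‖P.eval w‖ ≤ M * (‖w‖ / R) ^ P.natDegree := by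
  have hw0 : w ≠ 0 := norm_pos_iff.1 (hR.trans_le hw)
  have h_sphere : ∀ u ∈ frontier (ball (0 : ℂ) R⁻¹), ‖P.reverse.eval u‖ ≤ M / R ^ P.natDegree := by
    intro u hu
    rw [frontier_ball _ (inv_ne_zero hR.ne'), mem_sphere_zero_iff_norm] at hu
    have hu0 : u ≠ 0 := norm_pos_iff.1 (hu ▸ inv_pos.2 hR)
    have hu_inv : ‖u⁻¹‖ = R := by rw [norm_inv, hu, inv_inv]
    have h_eval := congrArg norm (P.eval_eq_eval_reverse_inv_mul_pow (inv_ne_zero hu0))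
    rw [inv_inv, norm_mul, norm_pow, hu_inv] at h_eval
    rw [le_div_iff₀ (by positivity), ← h_eval]
    exact hM _ hu_inv
  have hw_inv : w⁻¹ ∈ closure (ball (0 : ℂ) R⁻¹) := by
    rw [closure_ball _ (inv_ne_zero hR.ne'), mem_closedBall_zero_iff, norm_inv]
    exact inv_anti₀ hR hw
  have h_reverse := Complex.norm_le_of_forall_mem_frontier_norm_le isBounded_ball
    P.reverse.differentiable.diffContOnCl h_sphere hw_inv
  calc ‖P.eval w‖ = ‖P.reverse.eval w⁻¹‖ * ‖w‖ ^ P.natDegree := by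
        rw [P.eval_eq_eval_reverse_inv_mul_pow hw0, norm_mul, norm_pow]
    _ ≤ M / R ^ P.natDegree * ‖w‖ ^ P.natDegree := by gcongr
    _ = M * (‖w‖ / R) ^ P.natDegree := by rw [div_pow]; ring

theorem pow_div_le_exp_sq_sub_sq_div_two {n : ℕ} {R s : ℝ} (hR : 0 < R) (hRs : R ≤ s)
    (hn : (n : ℝ) ≤ R ^ 2) : (s / R) ^ n ≤ Real.exp ((s ^ 2 - R ^ 2) / 2) := by
  have ht : 1 ≤ s / R := (one_le_div hR).2 hRs
  have h_log : Real.log (s / R) ≤ ((s / R) ^ 2 - 1) / 2 := by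
    have := Real.log_le_sub_one_of_pos (pow_pos (zero_lt_one.trans_le ht) 2)
    rw [Real.log_pow] at this
    push_cast at this
    linarith
  calc (s / R) ^ n = Real.exp (n * Real.log (s / R)) := by
        rw [Real.exp_nat_mul, Real.exp_log (zero_lt_one.trans_le ht)]
    _ ≤ Real.exp (R ^ 2 * (((s / R) ^ 2 - 1) / 2)) := by
        gcongr
        exact Real.log_nonneg ht
    _ = Real.exp ((s ^ 2 - R ^ 2) / 2) := by congr 1; field_simp

theorem gaussian_weighted_polynomial_max_in_ball_general
    (P : Polynomial ℂ) (R : ℝ) (hR : 0 < R)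
    (hdeg : (P.natDegree : ℝ) ≤ R ^ 2) :
    ∃ z : ℂ, ‖z‖ ≤ R ∧
      ∀ w : ℂ, Real.exp (-‖w‖ ^ 2 / 2) * ‖P.eval w‖ ≤
        Real.exp (-‖z‖ ^ 2 / 2) * ‖P.eval z‖ := by
  set F : ℂ → ℝ := fun w => Real.exp (-‖w‖ ^ 2 / 2) * ‖P.eval w‖
  have hF : Continuous F := by fun_prop
  obtain ⟨z, hz, hmax⟩ := (isCompact_closedBall (0 : ℂ) R).exists_isMaxOn
    ⟨0, mem_closedBall_self hR.le⟩ hF.continuousOn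
  rw [mem_closedBall_zero_iff] at hz
  refine ⟨z, hz, fun w => ?_⟩
  rcases le_or_gt ‖w‖ R with hw | hw
  · exact hmax (mem_closedBall_zero_iff.2 hw)
  have h_sphere : ∀ v : ℂ, ‖v‖ = R → ‖P.eval v‖ ≤ Real.exp (R ^ 2 / 2) * F z := by
    intro v hv
    have h_le : F v ≤ F z := hmax (mem_closedBall_zero_iff.2 hv.le)
    simp only [F, hv] at h_le
    rwa [← div_le_iff₀' (Real.exp_pos _), div_eq_inv_mul, ← Real.exp_neg, ← neg_div]
  calc Real.exp (-‖w‖ ^ 2 / 2) * ‖P.eval w‖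
      ≤ Real.exp (-‖w‖ ^ 2 / 2) * (Real.exp (R ^ 2 / 2) * F z * (‖w‖ / R) ^ P.natDegree) := by
        gcongr
        exact P.norm_eval_le_mul_div_pow_of_norm_le_on_sphere hR h_sphere hw.le
    _ ≤ Real.exp (-‖w‖ ^ 2 / 2) * (Real.exp (R ^ 2 / 2) * F z *
          Real.exp ((‖w‖ ^ 2 - R ^ 2) / 2)) := by
        gcongr
        exact pow_div_le_exp_sq_sub_sq_div_two hR hw.le hdeg
    _ = F z * Real.exp (-‖w‖ ^ 2 / 2 + R ^ 2 / 2 + (‖w‖ ^ 2 - R ^ 2) / 2) := by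
        rw [Real.exp_add, Real.exp_add]; ring
    _ = F z := by ring_nf; rw [Real.exp_zero, mul_one]

theorem gaussian_weighted_polynomial_max_in_ball
    (P : Polynomial ℂ) (hP : P ≠ 0) (R : ℝ) (hR : 0 < R)
    (hdeg : (P.natDegree : ℝ) ≤ R ^ 2) :
    ∃ z : ℂ, ‖z‖ ≤ R ∧
      ∀ w : ℂ, Real.exp (-‖w‖ ^ 2 / 2) * ‖P.eval w‖ ≤
        Real.exp (-‖z‖ ^ 2 / 2) * ‖P.eval z‖ :=
  gaussian_weighted_polynomial_max_in_ball_general P R hR hdeg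
end

section
/- Let P₁, ..., P_N be nonzero complex polynomials in d variables, δ₁, ..., δ_N > 0 with Σ_k δ_k²·deg(P_k) ≤ R², and let z_M be a maximizer of F(z) = e^{−|z|²/2}Π_k|P_k(z)|^{δ_k²} over the closed ball of radius R in ℂ^d. Then for any subset of indices i₁ < ... < i_m, the Euclidean distance from z_M to the common zero set {z : P_{i₁}(z) = ... = P_{i_m}(z) = 0} is at least √(δ_{i₁}² + ... + δ_{i_m}²). -/
/-!
On a complex line `t ↦ w + t • ξ`, `F` is `exp (-‖w + t • ξ‖² / 2)` times `∏ ‖pₖ t‖ ^ δₖ²` for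
one-variable polynomials `pₖ`, and such products obey the maximum modulus principle on discs
(the real exponents are handled by the tensor-power trick: take `L`-th powers, round exponents up
to integers, let `L → ∞`).

First, `z_M` maximises `F` on all of `ℂ^d`: for `‖z‖ = T R > R` the reversed polynomials
`s ^ deg Pₖ * Pₖ (s⁻¹ • z)` compare `z` with the points `s⁻¹ • z`, `‖s‖ = T`, of the sphere of
radius `R`; this costs a factor `T ^ ∑ δₖ² deg Pₖ ≤ T ^ R²`, which the Gaussian factor
`exp (-(T² - 1) R² / 2)` absorbs.

Next, on the line through a common zero `w` (at `t = 0`) and `z_M` (at `t = 1`) the `P_{i_j}`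
vanish at `t = 0`; dividing them by `t` gains `T ^ σ`, `σ = ∑ δ_{i_j}²`, on the circle `‖t‖ = T`,
where the Gaussian loses at most `exp ((T² - 1) ‖z_M - w‖² / 2)`. So
`T ^ σ ≤ exp ((T² - 1) ‖z_M - w‖² / 2)` for all `T > 1`, and `T → 1` gives `σ ≤ ‖z_M - w‖²`.
-/

open Finset Metric Filter Topology

lemma le_of_forall_pow_le_pow_mul {x C K : ℝ} (hC : 0 ≤ C)
    (h : ∀ L : ℕ, 0 < L → x ^ L ≤ C ^ L * K) : x ≤ C := by
  by_contra! hxC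
  rcases hC.eq_or_lt with rfl | hC
  · simpa [hxC.not_ge] using h 1 one_pos
  obtain ⟨L, hL⟩ := pow_unbounded_of_one_lt K ((one_lt_div hC).2 hxC)
  have hL' : K < (x / C) ^ (L + 1) :=
    hL.trans_le (pow_le_pow_right₀ ((one_lt_div hC).2 hxC).le L.le_succ)
  rw [div_pow, lt_div_iff₀ (by positivity)] at hL'
  linarith [h (L + 1) L.succ_pos]

lemma Real.rpow_le_max_one {x e : ℝ} (hx : 0 ≤ x) (he₀ : 0 ≤ e) (he₁ : e ≤ 1) :
    x ^ e ≤ max 1 x := by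
  rcases le_total x 1 with hx1 | hx1
  · exact (Real.rpow_le_one hx hx1 he₀).trans (le_max_left _ _)
  · exact ((Real.rpow_le_rpow_of_exponent_le hx1 he₁).trans_eq (Real.rpow_one x)).trans
      (le_max_right _ _)

lemma Real.min_one_le_rpow {x e : ℝ} (hx : 0 ≤ x) (he₀ : 0 ≤ e) (he₁ : e ≤ 1) :
    min 1 x ≤ x ^ e := by
  rcases le_total x 1 with hx1 | hx1
  · exact (min_le_right _ _).trans ((Real.rpow_one x).symm.trans_le
      (Real.rpow_le_rpow_of_exponent_ge' hx hx1 he₀ he₁))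
  · exact (min_le_left _ _).trans (Real.one_le_rpow hx1 he₀)

lemma pow_natCeil_mul_eq {x a : ℝ} (hx : 0 ≤ x) (ha : 0 < a) {L : ℕ} (hL : 0 < L) :
    x ^ ⌈L * a⌉₊ = (x ^ a) ^ L * x ^ ((⌈L * a⌉₊ : ℝ) - L * a) := by
  have hLa : 0 < (L : ℝ) * a := by positivity
  rw [← Real.rpow_natCast, ← Real.rpow_mul_natCast hx, ← Real.rpow_add' hx]
  · ring_nf
  · rw [mul_comm a, add_sub_cancel]; exact (hLa.trans_le (Nat.le_ceil _)).ne'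

lemma natCeil_sub_mem_Icc {y : ℝ} (hy : 0 ≤ y) : (⌈y⌉₊ : ℝ) - y ∈ Set.Icc 0 1 :=
  ⟨sub_nonneg.2 (Nat.le_ceil y), by linarith [Nat.ceil_lt_add_one hy]⟩

lemma pow_natCeil_mul_le {x a : ℝ} (hx : 0 ≤ x) (ha : 0 < a) {L : ℕ} (hL : 0 < L) :
    x ^ ⌈L * a⌉₊ ≤ (x ^ a) ^ L * max 1 x := by
  obtain ⟨h₀, h₁⟩ := natCeil_sub_mem_Icc (by positivity : (0 : ℝ) ≤ L * a)
  rw [pow_natCeil_mul_eq hx ha hL]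
  gcongr
  exact Real.rpow_le_max_one hx h₀ h₁

lemma le_pow_natCeil_mul {x a : ℝ} (hx : 0 ≤ x) (ha : 0 < a) {L : ℕ} (hL : 0 < L) :
    (x ^ a) ^ L * min 1 x ≤ x ^ ⌈L * a⌉₊ := by
  obtain ⟨h₀, h₁⟩ := natCeil_sub_mem_Icc (by positivity : (0 : ℝ) ≤ L * a)
  rw [pow_natCeil_mul_eq hx ha hL]
  gcongr
  exact Real.min_one_le_rpow hx h₀ h₁

theorem forall_rpow_le_exp_iff {σ b : ℝ} (hb : 0 ≤ b) :
    (∀ T : ℝ, 1 < T → T ^ σ ≤ Real.exp ((T ^ 2 - 1) * b / 2)) ↔ σ ≤ b := by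
  constructor
  · intro h
    rcases lt_or_ge σ 0 with hσ | hσ
    · linarith
    have key : ∀ T : ℝ, 1 < T → σ ≤ T * (T + 1) * b / 2 := by
      intro T hT
      have hT₀ : 0 < T := by linarith
      have hlog := h T hT
      rw [Real.rpow_def_of_pos hT₀, Real.exp_le_exp] at hlog
      have hinv := Real.one_sub_inv_le_log_of_pos hT₀
      refine le_of_mul_le_mul_right ?_ (sub_pos.2 hT)
      calc σ * (T - 1) = T * (σ * (1 - T⁻¹)) := by field_simp
        _ ≤ T * ((T ^ 2 - 1) * b / 2) := by
          gcongr
          linarith [mul_le_mul_of_nonneg_left hinv hσ]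
        _ = T * (T + 1) * b / 2 * (T - 1) := by ring
    have hlim : Tendsto (fun T : ℝ => T * (T + 1) * b / 2) (𝓝[>] 1) (𝓝 (1 * (1 + 1) * b / 2)) :=
      ((continuous_id.mul (continuous_id.add continuous_const)).mul continuous_const
        |>.div_const 2).tendsto 1 |>.mono_left nhdsWithin_le_nhds
    have := ge_of_tendsto hlim (eventually_nhdsWithin_of_forall key)
    linarith
  · intro h T hT
    have hT₀ : 0 < T := by linarith
    calc T ^ σ ≤ T ^ b := Real.rpow_le_rpow_of_exponent_le hT.le h
      _ = Real.exp (b * Real.log T) := by rw [Real.rpow_def_of_pos hT₀, mul_comm]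
      _ ≤ Real.exp ((T ^ 2 - 1) * b / 2) := by
        gcongr
        have := Real.log_le_sub_one_of_pos (by positivity : 0 < T ^ 2)
        rw [Real.log_pow] at this
        push_cast at this
        nlinarith

theorem norm_mul_prod_rpow_le_of_forall_mem_sphere {ι : Type*} [Fintype ι] {g : ℂ → ℂ}
    {f : ι → ℂ → ℂ} (hg : Differentiable ℂ g) (hf : ∀ k, Differentiable ℂ (f k)) {a : ι → ℝ}
    (ha : ∀ k, 0 < a k) {c z : ℂ} {T C : ℝ} (hT : 0 < T) (hz : z ∈ closedBall c T)
    (hC : ∀ t ∈ sphere c T, ‖g t‖ * ∏ k, ‖f k t‖ ^ a k ≤ C) :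
    ‖g z‖ * ∏ k, ‖f k z‖ ^ a k ≤ C := by
  have hC₀ : 0 ≤ C :=
    (by positivity : (0 : ℝ) ≤ ‖g (c + T)‖ * ∏ k, ‖f k (c + T)‖ ^ a k).trans
      (hC (c + T) (by simp [abs_of_pos hT]))
  by_cases h₀ : ‖g z‖ * ∏ k, ‖f k z‖ ^ a k = 0
  · exact h₀.trans_le hC₀
  have hfz : ∀ k, 0 < ‖f k z‖ := fun k => (norm_nonneg _).lt_of_ne fun h =>
    h₀ (mul_eq_zero_of_right _ (prod_eq_zero (mem_univ k) (by simp [← h, (ha k).ne'])))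
  choose B hB using fun k => (isCompact_sphere c T).exists_bound_of_continuousOn
    (hf k).continuous.continuousOn
  have hκ : 0 < ∏ k, min 1 ‖f k z‖ := prod_pos fun k _ => lt_min one_pos (hfz k)
  refine le_of_forall_pow_le_pow_mul (K := (∏ k, max 1 (B k)) / ∏ k, min 1 ‖f k z‖) hC₀
    fun L hL => ?_
  -- `‖G‖` is `(‖g‖ * ∏ ‖fₖ‖ ^ aₖ) ^ L` up to factors that do not grow with `L`.
  set G : ℂ → ℂ := fun t => g t ^ L * ∏ k, f k t ^ ⌈L * a k⌉₊
  have hG : ∀ t, ‖G t‖ = ‖g t‖ ^ L * ∏ k, ‖f k t‖ ^ ⌈L * a k⌉₊ := by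
    simp [G, norm_prod]
  have hGz : (‖g z‖ * ∏ k, ‖f k z‖ ^ a k) ^ L * ∏ k, min 1 ‖f k z‖ ≤ ‖G z‖ := by
    rw [hG, mul_pow, ← prod_pow, mul_assoc, ← prod_mul_distrib]
    gcongr with k
    exact le_pow_natCeil_mul (norm_nonneg _) (ha k) hL
  have hGsphere : ‖G z‖ ≤ C ^ L * ∏ k, max 1 (B k) := by
    refine Complex.norm_le_of_forall_mem_frontier_norm_le isBounded_ball
      (Differentiable.diffContOnCl (by fun_prop)) (fun t ht => ?_) (by rwa [closure_ball c hT.ne'])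
    rw [frontier_ball c hT.ne'] at ht
    calc ‖G t‖ ≤ ‖g t‖ ^ L * ∏ k, ((‖f k t‖ ^ a k) ^ L * max 1 (B k)) := by
          rw [hG]
          gcongr with k
          exact (pow_natCeil_mul_le (norm_nonneg _) (ha k) hL).trans
            (by gcongr; exact hB k t ht)
      _ = (‖g t‖ * ∏ k, ‖f k t‖ ^ a k) ^ L * ∏ k, max 1 (B k) := by
          rw [prod_mul_distrib, prod_pow, mul_pow, mul_assoc]
      _ ≤ C ^ L * ∏ k, max 1 (B k) := by
          gcongr
          exact hC t ht
  rw [mul_div_assoc', le_div_iff₀ hκ]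
  exact hGz.trans hGsphere

namespace MvPolynomial

variable {R σ : Type*} [CommSemiring R]

noncomputable def restrictLine (p : MvPolynomial σ R) (a b : σ → R) : Polynomial R :=
  aeval (fun i => Polynomial.C (b i) * Polynomial.X + Polynomial.C (a i)) p

theorem eval_restrictLine (p : MvPolynomial σ R) (a b : σ → R) (t : R) :
    (p.restrictLine a b).eval t = eval (fun i => b i * t + a i) p := by
  simp only [restrictLine, aeval_def, polynomial_eval_eval₂, Polynomial.eval_add,
    Polynomial.eval_mul, Polynomial.eval_C, Polynomial.eval_X]
  congr 1
  ext; simp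

theorem natDegree_restrictLine_le (p : MvPolynomial σ R) (a b : σ → R) :
    (p.restrictLine a b).natDegree ≤ p.totalDegree :=
  (aeval_natDegree_le p le_rfl _ fun _ => Polynomial.natDegree_linear_le).trans_eq (mul_one _)

theorem totalDegree_pos_of_eval_eq_zero {p : MvPolynomial σ R} (hp : p ≠ 0) {x : σ → R}
    (hx : eval x p = 0) : 0 < p.totalDegree := by
  refine Nat.pos_of_ne_zero fun h => hp ?_
  rw [totalDegree_eq_zero_iff_eq_C.1 h] at hx ⊢
  simp_all

end MvPolynomial

theorem Polynomial.eval_eq_mul_eval_divX {R : Type*} [CommSemiring R] {p : Polynomial R}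
    (hp : p.eval 0 = 0) (t : R) : p.eval t = t * p.divX.eval t := by
  conv_lhs => rw [← Polynomial.X_mul_divX_add p, Polynomial.coeff_zero_eq_eval_zero, hp]
  simp

theorem Polynomial.eval_reflect {K : Type*} [Field K] {f : Polynomial K} {N : ℕ}
    (hf : f.natDegree ≤ N) {s : K} (hs : s ≠ 0) :
    (f.reflect N).eval s = s ^ N * f.eval s⁻¹ := by
  have : Invertible s⁻¹ := invertibleOfNonzero (inv_ne_zero hs)
  have h := eval₂_reflect_mul_pow (RingHom.id K) s⁻¹ N f hf
  simp only [invOf_eq_inv, inv_inv, eval₂_id] at h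
  rw [← h, mul_left_comm, ← mul_pow, mul_inv_cancel₀ hs, one_pow, mul_one]

section Plank

variable {n ι : Type*} [Fintype n] [Fintype ι]

noncomputable def plankFunction (P : ι → MvPolynomial n ℂ) (a : ι → ℝ)
    (z : EuclideanSpace ℂ n) : ℝ :=
  Real.exp (-‖z‖ ^ 2 / 2) * ∏ k, ‖MvPolynomial.eval (fun i => z i) (P k)‖ ^ a k

variable {P : ι → MvPolynomial n ℂ} {a : ι → ℝ}

theorem prod_norm_eval_rpow_eq (z : EuclideanSpace ℂ n) :
    ∏ k, ‖MvPolynomial.eval (fun i => z i) (P k)‖ ^ a k =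
      plankFunction P a z * Real.exp (‖z‖ ^ 2 / 2) := by
  rw [plankFunction, mul_right_comm, ← Real.exp_add, neg_div, neg_add_cancel, Real.exp_zero,
    one_mul]

theorem plankFunction_nonneg (z : EuclideanSpace ℂ n) : 0 ≤ plankFunction P a z := by
  unfold plankFunction; positivity

theorem exists_plankFunction_pos (hP : ∀ k, P k ≠ 0) : ∃ z, 0 < plankFunction P a z := by
  obtain ⟨v, hv⟩ : ∃ v : n → ℂ, MvPolynomial.eval v (∏ k, P k) ≠ 0 := by
    by_contra! h
    exact prod_ne_zero_iff.2 (fun k _ => hP k) (MvPolynomial.funext (by simpa using h))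
  refine ⟨WithLp.toLp 2 v, mul_pos (Real.exp_pos _) (prod_pos fun k _ => ?_)⟩
  rw [map_prod] at hv
  exact Real.rpow_pos_of_pos (norm_pos_iff.2 (prod_ne_zero_iff.1 hv k (mem_univ k))) _

theorem prod_norm_eval_rpow_le_of_forall_mem_closedBall (ha : ∀ k, 0 < a k) {R C : ℝ}
    (hR : 0 < R) (hC : ∀ w ∈ closedBall 0 R, plankFunction P a w ≤ C)
    {z : EuclideanSpace ℂ n} (hzR : R < ‖z‖) :
    ∏ k, ‖MvPolynomial.eval (fun i => z i) (P k)‖ ^ a k ≤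
      (‖z‖ / R) ^ (∑ k, a k * (P k).totalDegree) * (C * Real.exp (R ^ 2 / 2)) := by
  set T := ‖z‖ / R
  have hT : 1 < T := (one_lt_div hR).2 hzR
  have hT₀ : 0 < T := one_pos.trans hT
  set p : ι → Polynomial ℂ := fun k => (P k).restrictLine 0 (fun i => z i)
  have hp : ∀ k (t : ℂ), (p k).eval t = MvPolynomial.eval (fun i => (t • z) i) (P k) := by
    intro k t
    simp [p, MvPolynomial.eval_restrictLine, mul_comm]
  set f : ι → ℂ → ℂ := fun k s => ((p k).reflect (P k).totalDegree).eval s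
  have hf : ∀ k {s : ℂ}, s ≠ 0 → f k s = s ^ (P k).totalDegree * (p k).eval s⁻¹ := fun k s hs =>
    Polynomial.eval_reflect (MvPolynomial.natDegree_restrictLine_le _ _ _) hs
  have hsphere : ∀ s ∈ sphere (0 : ℂ) T, ‖(1 : ℂ)‖ * ∏ k, ‖f k s‖ ^ a k ≤
      T ^ (∑ k, a k * (P k).totalDegree) * (C * Real.exp (R ^ 2 / 2)) := by
    intro s hs
    rw [mem_sphere_zero_iff_norm] at hs
    have hs₀ : s ≠ 0 := norm_pos_iff.1 (hs ▸ hT₀)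
    have hsz : ‖s⁻¹ • z‖ = R := by
      rw [norm_smul, norm_inv, hs, ← div_eq_inv_mul, div_div_cancel₀ (hR.trans hzR).ne']
    calc ‖(1 : ℂ)‖ * ∏ k, ‖f k s‖ ^ a k
        = T ^ (∑ k, a k * (P k).totalDegree) *
            ∏ k, ‖MvPolynomial.eval (fun i => (s⁻¹ • z) i) (P k)‖ ^ a k := by
          simp only [norm_one, one_mul, hf _ hs₀, hp, norm_mul, norm_pow, hs]
          rw [Real.rpow_sum_of_pos hT₀, ← prod_mul_distrib]
          refine prod_congr rfl fun k _ => ?_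
          rw [Real.mul_rpow (by positivity) (norm_nonneg _), mul_comm (a k),
            Real.rpow_natCast_mul hT₀.le]
      _ ≤ T ^ (∑ k, a k * (P k).totalDegree) * (C * Real.exp (R ^ 2 / 2)) := by
          rw [prod_norm_eval_rpow_eq, hsz]
          gcongr
          exact hC _ (mem_closedBall_zero_iff.2 hsz.le)
  have hone := norm_mul_prod_rpow_le_of_forall_mem_sphere (g := fun _ => 1)
    (differentiable_const 1) (fun k => Polynomial.differentiable _) ha hT₀
    (z := 1) (by simp [hT.le]) hsphere
  simpa only [f, norm_one, one_mul, hf _ one_ne_zero, one_pow, inv_one, hp, one_smul] using hone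

theorem plankFunction_le_of_forall_mem_closedBall (ha : ∀ k, 0 < a k) {R C : ℝ} (hR : 0 < R)
    (hdeg : ∑ k, a k * (P k).totalDegree ≤ R ^ 2)
    (hC : ∀ w ∈ closedBall 0 R, plankFunction P a w ≤ C) (z : EuclideanSpace ℂ n) :
    plankFunction P a z ≤ C := by
  rcases le_or_gt ‖z‖ R with hzR | hzR
  · exact hC z (mem_closedBall_zero_iff.2 hzR)
  set T := ‖z‖ / R
  have hC₀ : 0 ≤ C := (plankFunction_nonneg 0).trans (hC 0 (by simp [hR.le]))
  have hzT : ‖z‖ = T * R := (div_mul_cancel₀ _ hR.ne').symm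
  have hTD := (forall_rpow_le_exp_iff (sq_nonneg R)).2 hdeg T ((one_lt_div hR).2 hzR)
  calc plankFunction P a z
      = Real.exp (-‖z‖ ^ 2 / 2) * ∏ k, ‖MvPolynomial.eval (fun i => z i) (P k)‖ ^ a k := rfl
    _ ≤ Real.exp (-‖z‖ ^ 2 / 2) *
          (T ^ (∑ k, a k * (P k).totalDegree) * (C * Real.exp (R ^ 2 / 2))) := by
        gcongr
        exact prod_norm_eval_rpow_le_of_forall_mem_closedBall ha hR hC hzR
    _ ≤ Real.exp (-‖z‖ ^ 2 / 2) *
          (Real.exp ((T ^ 2 - 1) * R ^ 2 / 2) * (C * Real.exp (R ^ 2 / 2))) := by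
        gcongr
    _ = C * Real.exp (-‖z‖ ^ 2 / 2 + (T ^ 2 - 1) * R ^ 2 / 2 + R ^ 2 / 2) := by
        rw [Real.exp_add, Real.exp_add]; ring
    _ = C := by
        rw [hzT, show -(T * R) ^ 2 / 2 + (T ^ 2 - 1) * R ^ 2 / 2 + R ^ 2 / 2 = 0 by ring,
          Real.exp_zero, mul_one]

theorem plankFunction_add_smul (w ξ : EuclideanSpace ℂ n) (t : ℂ) :
    plankFunction P a (w + t • ξ) = Real.exp (-(‖w‖ ^ 2 + ‖t‖ ^ 2 * ‖ξ‖ ^ 2) / 2) *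
      (‖Complex.exp (-(t * inner ℂ w ξ))‖ *
        ∏ k, ‖((P k).restrictLine (fun i => w i) (fun i => ξ i)).eval t‖ ^ a k) := by
  have hnorm : ‖w + t • ξ‖ ^ 2 = ‖w‖ ^ 2 + 2 * (t * inner ℂ w ξ).re + ‖t‖ ^ 2 * ‖ξ‖ ^ 2 := by
    rw [norm_add_sq (𝕜 := ℂ), inner_smul_right, norm_smul, mul_pow, RCLike.re_to_complex]
  simp only [plankFunction, MvPolynomial.eval_restrictLine, Complex.norm_exp, Complex.neg_re,
    hnorm]
  rw [← mul_assoc, ← Real.exp_add]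
  congr 2
  · ring
  · ext k
    simp [add_comm, mul_comm]

theorem plankFunction_add_smul_of_eval_eq_zero [DecidableEq ι] (ha : ∀ k, 0 ≤ a k)
    {S : Finset ι} {w : EuclideanSpace ℂ n}
    (hw : ∀ k ∈ S, MvPolynomial.eval (fun i => w i) (P k) = 0) (ξ : EuclideanSpace ℂ n) (t : ℂ) :
    plankFunction P a (w + t • ξ) =
      Real.exp (-(‖w‖ ^ 2 + ‖t‖ ^ 2 * ‖ξ‖ ^ 2) / 2) * ‖t‖ ^ (∑ k ∈ S, a k) *
        (‖Complex.exp (-(t * inner ℂ w ξ))‖ * ∏ k, ‖(if k ∈ S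
          then ((P k).restrictLine (fun i => w i) (fun i => ξ i)).divX
          else (P k).restrictLine (fun i => w i) (fun i => ξ i)).eval t‖ ^ a k) := by
  have hfactor : ∀ k, ‖((P k).restrictLine (fun i => w i) (fun i => ξ i)).eval t‖ ^ a k =
      (if k ∈ S then ‖t‖ ^ a k else 1) * ‖(if k ∈ S
        then ((P k).restrictLine (fun i => w i) (fun i => ξ i)).divX
        else (P k).restrictLine (fun i => w i) (fun i => ξ i)).eval t‖ ^ a k := by
    intro k
    by_cases hk : k ∈ S
    · rw [if_pos hk, if_pos hk, Polynomial.eval_eq_mul_eval_divX (by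
        simpa [MvPolynomial.eval_restrictLine] using hw k hk), norm_mul,
        Real.mul_rpow (norm_nonneg _) (norm_nonneg _)]
    · rw [if_neg hk, if_neg hk, one_mul]
  rw [plankFunction_add_smul, Real.rpow_sum_of_nonneg (norm_nonneg t) fun k _ => ha k]
  simp only [hfactor, prod_mul_distrib, prod_ite_mem, univ_inter]
  ring

theorem sum_le_dist_sq_of_forall_le (ha : ∀ k, 0 < a k) {z₀ w : EuclideanSpace ℂ n}
    (hmax : ∀ z, plankFunction P a z ≤ plankFunction P a z₀) (hpos : 0 < plankFunction P a z₀)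
    {S : Finset ι} (hw : ∀ k ∈ S, MvPolynomial.eval (fun i => w i) (P k) = 0) :
    ∑ k ∈ S, a k ≤ dist z₀ w ^ 2 := by
  classical
  rw [dist_eq_norm]
  set ξ := z₀ - w
  set σ := ∑ k ∈ S, a k
  set q : ι → Polynomial ℂ := fun k => (P k).restrictLine (fun i => w i) (fun i => ξ i)
  set f : ι → ℂ → ℂ := fun k t => (if k ∈ S then (q k).divX else q k).eval t
  set g : ℂ → ℂ := fun t => Complex.exp (-(t * inner ℂ w ξ))
  set h : ℂ → ℝ := fun t => ‖g t‖ * ∏ k, ‖f k t‖ ^ a k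
  have hline : ∀ t, plankFunction P a (w + t • ξ) =
      Real.exp (-(‖w‖ ^ 2 + ‖t‖ ^ 2 * ‖ξ‖ ^ 2) / 2) * ‖t‖ ^ σ * h t :=
    plankFunction_add_smul_of_eval_eq_zero (fun k => (ha k).le) hw ξ
  rw [← forall_rpow_le_exp_iff (sq_nonneg _)]
  intro T hT
  have hT₀ : 0 < T := one_pos.trans hT
  have hsphere : ∀ t ∈ sphere (0 : ℂ) T, h t ≤
      plankFunction P a z₀ * Real.exp ((‖w‖ ^ 2 + T ^ 2 * ‖ξ‖ ^ 2) / 2) / T ^ σ := by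
    intro t ht
    rw [mem_sphere_zero_iff_norm] at ht
    have hle := hmax (w + t • ξ)
    rw [hline, ht] at hle
    rw [le_div_iff₀ (by positivity)]
    calc h t * T ^ σ = Real.exp (-(‖w‖ ^ 2 + T ^ 2 * ‖ξ‖ ^ 2) / 2) * T ^ σ * h t *
          Real.exp ((‖w‖ ^ 2 + T ^ 2 * ‖ξ‖ ^ 2) / 2) := by
            rw [neg_div, Real.exp_neg]; field_simp
      _ ≤ plankFunction P a z₀ * Real.exp ((‖w‖ ^ 2 + T ^ 2 * ‖ξ‖ ^ 2) / 2) := by gcongr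
  have h₁ := norm_mul_prod_rpow_le_of_forall_mem_sphere (g := g) (by fun_prop)
    (fun k => Polynomial.differentiable _) ha hT₀ (z := 1) (by simp [hT.le]) hsphere
  have hz₀ := hline 1
  rw [one_smul, add_sub_cancel, norm_one, Real.one_rpow, one_pow, one_mul, mul_one] at hz₀
  refine le_of_mul_le_mul_right ?_ hpos
  calc T ^ σ * plankFunction P a z₀
      = T ^ σ * (Real.exp (-(‖w‖ ^ 2 + ‖ξ‖ ^ 2) / 2) * h 1) := by rw [← hz₀]
    _ ≤ T ^ σ * (Real.exp (-(‖w‖ ^ 2 + ‖ξ‖ ^ 2) / 2) *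
          (plankFunction P a z₀ * Real.exp ((‖w‖ ^ 2 + T ^ 2 * ‖ξ‖ ^ 2) / 2) / T ^ σ)) := by
        gcongr
    _ = Real.exp ((T ^ 2 - 1) * ‖ξ‖ ^ 2 / 2) * plankFunction P a z₀ := by
        field_simp
        rw [← Real.exp_add]
        ring_nf

end Plank

theorem complex_polynomial_plank_max_avoids_common_zeros
    (d N : ℕ) (P : Fin N → MvPolynomial (Fin d) ℂ)
    (hP : ∀ k, P k ≠ 0)
    (δ : Fin N → ℝ) (hδ : ∀ k, 0 < δ k) (R : ℝ)
    (hsum : ∑ k, δ k ^ 2 * ((P k).totalDegree : ℝ) ≤ R ^ 2)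
    (F : EuclideanSpace ℂ (Fin d) → ℝ)
    (hF : ∀ z, F z = Real.exp (-‖z‖ ^ 2 / 2) *
        ∏ k, ‖MvPolynomial.eval (fun i => z i) (P k)‖ ^ (δ k ^ 2))
    (z_M : EuclideanSpace ℂ (Fin d))
    (hz_M : z_M ∈ Metric.closedBall (0 : EuclideanSpace ℂ (Fin d)) R)
    (hmax : ∀ w ∈ Metric.closedBall (0 : EuclideanSpace ℂ (Fin d)) R, F w ≤ F z_M) :
    ∀ S : Finset (Fin N), ∀ w : EuclideanSpace ℂ (Fin d),
      (∀ k ∈ S, MvPolynomial.eval (fun i => w i) (P k) = 0) →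
        Real.sqrt (∑ k ∈ S, δ k ^ 2) ≤ dist z_M w := by
  intro S w hw
  obtain rfl : F = plankFunction P fun k => δ k ^ 2 := funext hF
  rcases S.eq_empty_or_nonempty with rfl | ⟨k₀, hk₀⟩
  · simp
  have hδ2 : ∀ k, 0 < δ k ^ 2 := fun k => pow_pos (hδ k) 2
  have hR : 0 < R := by
    have hdeg := MvPolynomial.totalDegree_pos_of_eval_eq_zero (hP k₀) (hw k₀ hk₀)
    have hR2 : 0 < R ^ 2 := (mul_pos (hδ2 k₀) (Nat.cast_pos.2 hdeg)).trans_le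
      ((single_le_sum (fun k _ => by positivity) (mem_univ k₀)).trans hsum)
    exact lt_of_pow_lt_pow_left₀ 2 (nonempty_closedBall.1 ⟨z_M, hz_M⟩) (by simpa using hR2)
  have hglobal := plankFunction_le_of_forall_mem_closedBall hδ2 hR hsum hmax
  obtain ⟨z, hz⟩ := exists_plankFunction_pos (a := fun k => δ k ^ 2) hP
  have hσ := sum_le_dist_sq_of_forall_le hδ2 hglobal (hz.trans_le (hglobal z)) hw
  exact (Real.sqrt_le_sqrt hσ).trans_eq (Real.sqrt_sq dist_nonneg)
end

section
/- Let δ > 0 and R > 0 with δ ≤ R. For the linear polynomial P(z) = ⟨z − y, u⟩ on ℂ^d (u a unit vector, y ∈ ℂ^d) and a point z_M maximizing e^{−|z|²/2}|P(z)|^{δ²} over the ball of radius R (assuming δ²·1 ≤ R²), z_M lies outside the cylinder {z : |⟨z − y, u⟩| < δ}; i.e., |⟨z_M − y, u⟩| ≥ δ. -/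
/-!
Suppose `r = |⟨z_M - y, u⟩| < δ` and put `a = |⟨y, u⟩|`. Since `‖z_M‖ ≥ |⟨z_M, u⟩| ≥ |a - r|`,
`F z_M ≤ g r` for `g t = exp (-(a - t)² / 2) * t ^ δ²`. On the complex line through `u` there is a
point `w` with `|⟨w - y, u⟩| = δ` and `‖w‖ = |a - δ|`, so `F w = g δ`, and `w` lies in the ball since
`a - δ ≤ a - r ≤ R` and `δ - a ≤ δ ≤ R`. Finally `g r < g δ`: after taking logarithms this is
`log x < (x² - 1) / 2` for `x = r / δ < 1`, contradicting the maximality of `z_M`.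
-/

open scoped InnerProductSpace

theorem Real.log_lt_sq_sub_one_div_two {x : ℝ} (hx0 : 0 < x) (hx1 : x ≠ 1) :
    Real.log x < (x ^ 2 - 1) / 2 := by
  have := Real.log_lt_sub_one_of_pos (pow_pos hx0 2)
    (by rwa [ne_eq, pow_eq_one_iff_of_nonneg hx0.le two_ne_zero])
  rw [Real.log_pow] at this
  push_cast at this
  linarith

theorem exp_neg_sq_mul_rpow_lt {a r δ : ℝ} (ha : 0 ≤ a) (hr : 0 ≤ r) (hrδ : r < δ) :
    Real.exp (-(a - r) ^ 2 / 2) * r ^ (δ ^ 2) < Real.exp (-(a - δ) ^ 2 / 2) * δ ^ (δ ^ 2) := by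
  have hδ : 0 < δ := hr.trans_lt hrδ
  rcases hr.eq_or_lt with rfl | hr
  · rw [Real.zero_rpow (by positivity), mul_zero]
    positivity
  have hlog : δ ^ 2 * Real.log (r / δ) < (r ^ 2 - δ ^ 2) / 2 := by
    have := mul_lt_mul_of_pos_left
      (Real.log_lt_sq_sub_one_div_two (div_pos hr hδ) (div_lt_one hδ |>.mpr hrδ).ne)
      (pow_pos hδ 2)
    rwa [div_pow, mul_div_assoc', mul_sub, mul_div_cancel₀ _ (by positivity), mul_one] at this
  rw [Real.log_div hr.ne' hδ.ne'] at hlog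
  rw [Real.rpow_def_of_pos hr, Real.rpow_def_of_pos hδ, ← Real.exp_add, ← Real.exp_add,
    Real.exp_lt_exp]
  nlinarith [mul_nonneg ha (sub_nonneg.mpr hrδ.le)]

variable {E : Type*} [NormedAddCommGroup E] [InnerProductSpace ℂ E]

theorem abs_norm_inner_sub_norm_inner_le {u : E} (hu : ‖u‖ = 1) (y z : E) :
    |‖⟪y, u⟫_ℂ‖ - ‖⟪z - y, u⟫_ℂ‖| ≤ ‖z‖ := by
  calc |‖⟪y, u⟫_ℂ‖ - ‖⟪z - y, u⟫_ℂ‖| = |‖⟪y, u⟫_ℂ‖ - ‖⟪y - z, u⟫_ℂ‖| := by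
        rw [inner_sub_left z, inner_sub_left y, norm_sub_rev]
    _ ≤ ‖⟪y, u⟫_ℂ - ⟪y - z, u⟫_ℂ‖ := abs_norm_sub_norm_le _ _
    _ = ‖⟪z, u⟫_ℂ‖ := by rw [← inner_sub_left, sub_sub_cancel]
    _ ≤ ‖z‖ := by simpa [hu] using norm_inner_le_norm (𝕜 := ℂ) z u

theorem Complex.exists_norm_eq_abs_sub_and_norm_sub_eq (c : ℂ) (t : ℝ) :
    ∃ ν : ℂ, ‖ν‖ = |‖c‖ - t| ∧ ‖ν - c‖ = |t| := by
  -- `e` is the direction of `c`; since `arg 0 = 0`, no case split on `c = 0` is needed.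
  set e := Complex.exp (c.arg * Complex.I)
  have he : ‖e‖ = 1 := Complex.norm_exp_ofReal_mul_I _
  refine ⟨(‖c‖ - t : ℝ) * e, ?_, ?_⟩
  · rw [norm_mul, he, mul_one, Complex.norm_real, Real.norm_eq_abs]
  · have : ((‖c‖ - t : ℝ) : ℂ) * e - c = -(t * e) := by
      nth_rewrite 2 [← Complex.norm_mul_exp_arg_mul_I c]
      push_cast; ring
    rw [this, norm_neg, norm_mul, he, mul_one, Complex.norm_real, Real.norm_eq_abs]

theorem inner_conj_smul_left_of_norm_eq_one {u : E} (hu : ‖u‖ = 1) (ν : ℂ) :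
    ⟪starRingEnd ℂ ν • u, u⟫_ℂ = ν := by
  simp [inner_self_eq_norm_sq_to_K, hu]

theorem exists_norm_eq_abs_sub_and_norm_inner_sub_eq {u : E} (hu : ‖u‖ = 1) (y : E) (t : ℝ) :
    ∃ w : E, ‖w‖ = |‖⟪y, u⟫_ℂ‖ - t| ∧ ‖⟪w - y, u⟫_ℂ‖ = |t| := by
  obtain ⟨ν, hν, hνc⟩ := Complex.exists_norm_eq_abs_sub_and_norm_sub_eq ⟪y, u⟫_ℂ t
  refine ⟨starRingEnd ℂ ν • u, ?_, ?_⟩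
  · rw [norm_smul, hu, mul_one, RCLike.norm_conj, hν]
  · rw [inner_sub_left, inner_conj_smul_left_of_norm_eq_one hu, hνc]

theorem linear_plank_max_avoids_cylinder
    (d : ℕ) (u y : EuclideanSpace ℂ (Fin d)) (hu : ‖u‖ = 1)
    (δ R : ℝ) (hδ : 0 < δ) (hδR : δ ≤ R)
    (F : EuclideanSpace ℂ (Fin d) → ℝ)
    (hF : ∀ z, F z = Real.exp (-‖z‖ ^ 2 / 2) *
        ‖(inner ℂ (z - y) u : ℂ)‖ ^ (δ ^ 2))
    (z_M : EuclideanSpace ℂ (Fin d))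
    (hz_M : z_M ∈ Metric.closedBall (0 : EuclideanSpace ℂ (Fin d)) R)
    (hmax : ∀ w ∈ Metric.closedBall (0 : EuclideanSpace ℂ (Fin d)) R, F w ≤ F z_M) :
    δ ≤ ‖(inner ℂ (z_M - y) u : ℂ)‖ := by
  by_contra! hr
  set a := ‖⟪y, u⟫_ℂ‖
  set r := ‖⟪z_M - y, u⟫_ℂ‖
  have hz_M : ‖z_M‖ ≤ R := mem_closedBall_zero_iff.mp hz_M
  have hproj : |a - r| ≤ ‖z_M‖ := abs_norm_inner_sub_norm_inner_le hu y z_M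
  obtain ⟨w, hw, hwδ⟩ := exists_norm_eq_abs_sub_and_norm_inner_sub_eq hu y δ
  have hw_mem : w ∈ Metric.closedBall 0 R := by
    rw [mem_closedBall_zero_iff, hw, abs_le]
    constructor <;> linarith [norm_nonneg ⟪y, u⟫_ℂ, (abs_le.mp hproj).2]
  have hF_z_M : F z_M ≤ Real.exp (-(a - r) ^ 2 / 2) * r ^ (δ ^ 2) := by
    have hsq : (a - r) ^ 2 ≤ ‖z_M‖ ^ 2 := by
      simpa using pow_le_pow_left₀ (abs_nonneg _) hproj 2
    rw [hF]
    exact mul_le_mul_of_nonneg_right (Real.exp_le_exp.mpr (by linarith)) (by positivity)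
  have hF_w : F w = Real.exp (-(a - δ) ^ 2 / 2) * δ ^ (δ ^ 2) := by
    rw [hF, hw, hwδ, sq_abs, abs_of_pos hδ]
  linarith [hmax w hw_mem, exp_neg_sq_mul_rpow_lt (norm_nonneg _ : 0 ≤ a) (norm_nonneg _) hr]
end
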